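/- arXiv:2405.05870 — 12 statements merged into one kernel-verified Lean document; each statement's English description precedes it below -/
import Mathlib

section
/- For every finite candidate set C with |C| ≥ 3 and every finite voter set V with |V| ≥ 2, there is no committee rule over (V,C) that satisfies both unanimity and conflict consistency. -/
open Finset

/-- A profile assigns to each voter a ranking of the `m` candidates, i.e. a bijection
from the candidate set `C` to the positions `Fin m` (position `0` = most preferred,
so the 1-based position of `a` in the ranking `r` is `(r a : ℕ) + 1`). -/
abbrev Profile (V C : Type*) (m : ℕ) := V → C ≃ Fin m

/-- `dpos r a b` is `v(ab) = v(b) - v(a)`, the signed difference of the positions of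
`b` and `a` in the ranking `r` (the `+1` shifts cancel). -/
def dpos {C : Type*} {m : ℕ} (r : C ≃ Fin m) (a b : C) : ℤ :=
  ((r b : ℕ) : ℤ) - ((r a : ℕ) : ℤ)

/-- `Vab P a b` is `V^{a≻b}`, the set of voters that prefer `a` to `b`. -/
def Vab {V C : Type*} {m : ℕ} [Fintype V] (P : Profile V C m) (a b : C) : Finset V :=
  Finset.univ.filter (fun v => P v a < P v b)

/-- A pair of distinct candidates is conflicting if both `V^{a≻b}` and `V^{b≻a}`
are nonempty. -/
def Conflicting {V C : Type*} {m : ℕ} [Fintype V] (P : Profile V C m) (a b : C) : Prop :=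
  (Vab P a b).Nonempty ∧ (Vab P b a).Nonempty

/-- For every finite candidate set `C` with `|C| ≥ 3` and every finite
voter set `V` with `|V| ≥ 2`, there is no committee rule over `(V, C)` (a map from
profiles to nonempty sets of 2-element committees) satisfying both unanimity and
conflict consistency. -/
theorem no_rule_unanimous_and_conflictConsistent
    (V C : Type*) [Fintype V] [DecidableEq V] [Fintype C] [DecidableEq C]
    (hV : 2 ≤ Fintype.card V) (hC : 3 ≤ Fintype.card C) :
    ¬ ∃ R : Profile V C (Fintype.card C) → Finset (Finset C),
        (∀ P, (R P).Nonempty) ∧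
        (∀ P, ∀ W ∈ R P, W.card = 2) ∧
        -- unanimity: a candidate ranked first by every voter is in every selected committee
        (∀ P (a : C), (∀ v : V, (P v a : ℕ) = 0) → ∀ W ∈ R P, a ∈ W) ∧
        -- conflict consistency: if some conflicting pair exists, every selected
        -- committee is a conflicting pair
        (∀ P, (∃ a b : C, a ≠ b ∧ Conflicting P a b) →
          ∀ W ∈ R P, ∃ a b : C, a ≠ b ∧ W = {a, b} ∧ Conflicting P a b) := by

  rintro ⟨R, hne, _hcard, huna, hcc⟩
  set m := Fintype.card C with hm
  have h0 : 0 < m := by omega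
  have h1 : 1 < m := by omega
  have h2 : 2 < m := by omega
  set i0 : Fin m := ⟨0, h0⟩
  set i1 : Fin m := ⟨1, h1⟩
  set i2 : Fin m := ⟨2, h2⟩
  have e0 : C ≃ Fin m := (Fintype.equivFin C)
  obtain ⟨v0, v1, hv01⟩ := Fintype.exists_pair_of_one_lt_card (by omega : 1 < Fintype.card V)
  set a : C := e0.symm i0 with ha
  set b : C := e0.symm i1 with hb
  set c : C := e0.symm i2 with hcdef
  set P : Profile V C m := fun v => if v = v0 then e0 else e0.trans (Equiv.swap i1 i2) with hP
  have h01 : i0 ≠ i1 := by simp [i0, i1, Fin.ext_iff]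
  have h02 : i0 ≠ i2 := by simp [i0, i2, Fin.ext_iff]
  have h12 : i1 ≠ i2 := by simp [i1, i2, Fin.ext_iff]
  have hPa : ∀ v, P v a = i0 := by
    intro v
    by_cases hv : v = v0 <;>
      simp [hP, hv, ha, Equiv.swap_apply_of_ne_of_ne h01 h02]
  -- a is never beaten
  have hno : ∀ x : C, ¬ (Vab P x a).Nonempty := by
    rintro x ⟨v, hv⟩
    simp only [Vab, Finset.mem_filter] at hv
    have h := hv.2
    rw [hPa v, Fin.lt_def] at h
    simp [i0] at h
  -- a conflicting pair exists
  have hbc : b ≠ c := fun h => h12 (e0.symm.injective h)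
  have hPv0 : P v0 = e0 := by simp [hP]
  have hPv1 : P v1 = e0.trans (Equiv.swap i1 i2) := by simp [hP, hv01.symm]
  have hlt : i1 < i2 := by simp [i1, i2, Fin.lt_def]
  have hconf : Conflicting P b c := by
    refine ⟨⟨v0, ?_⟩, ⟨v1, ?_⟩⟩
    · simp only [Vab, Finset.mem_filter, Finset.mem_univ, true_and, hPv0, hb, hcdef,
        Equiv.apply_symm_apply]
      exact hlt
    · simp only [Vab, Finset.mem_filter, Finset.mem_univ, true_and, hPv1, hb, hcdef,
        Equiv.trans_apply, Equiv.apply_symm_apply, Equiv.swap_apply_left,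
        Equiv.swap_apply_right]
      exact hlt
  obtain ⟨W, hW⟩ := hne P
  have haW : a ∈ W := huna P a (fun v => by simp [hPa v, i0]) W hW
  obtain ⟨x, y, hxy, hWxy, hcxy⟩ := hcc P ⟨b, c, hbc, hconf⟩ W hW
  rw [hWxy] at haW
  rcases Finset.mem_insert.mp haW with h | h
  · exact hno y (h ▸ hcxy.2)
  · have : a = y := Finset.mem_singleton.mp h
    exact hno x (this ▸ hcxy.1)
end

section
/- For a candidate set C with |C| = 4 and a voter set V with |V| = 2, there is no committee rule over (V,C) that satisfies matching domination, conflict consistency, and conflict monotonicity. -/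
set_option linter.unusedSectionVars false


open Finset

/-- The conflicting pair `{a,b}` matching-dominates the conflicting pair `{x,y}`:
there is a bijection `f : V → V` mapping `V^{a≻b}` onto `V^{x≻y}` and `V^{b≻a}` onto
`V^{y≻x}` with `|v(ab)| ≥ |f(v)(xy)|` for every voter `v`, strictly for at least one. -/
def MatchingDominates {V C : Type*} {m : ℕ} [Fintype V] (P : Profile V C m)
    (a b x y : C) : Prop :=
  Conflicting P a b ∧ Conflicting P x y ∧
  ∃ f : V ≃ V,
    (∀ v ∈ Vab P a b, f v ∈ Vab P x y) ∧
    (∀ v ∈ Vab P b a, f v ∈ Vab P y x) ∧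
    (∀ v : V, |dpos (P (f v)) x y| ≤ |dpos (P v) a b|) ∧
    (∃ v : V, |dpos (P (f v)) x y| < |dpos (P v) a b|)

/-- `P'` is obtained from `P` by swapping, in a single voter `w`'s ranking, one of
`a` or `b` with the candidate adjacent to it, so that `|v(ab)|` increases by one. -/
def AdjacentSwapIncrease {V C : Type*} {m : ℕ} [DecidableEq V] (P P' : Profile V C m)
    (a b : C) : Prop :=
  ∃ w : V, (∀ v : V, v ≠ w → P' v = P v) ∧
    ∃ c e : C, (c = a ∨ c = b) ∧ e ≠ c ∧
      -- `e` is adjacent to `c` in `w`'s ranking in `P`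
      |dpos (P w) c e| = 1 ∧
      -- `w`'s new ranking exchanges the positions of `c` and `e`
      P' w = (P w).trans (Equiv.swap (P w c) (P w e)) ∧
      -- the swap increases the distance between `a` and `b` by one
      |dpos (P' w) a b| = |dpos (P w) a b| + 1


/-! ### Auxiliary material for the proof -/

section Aux

instance {V C : Type*} {m : ℕ} [Fintype V] (P : Profile V C m) (a b : C) :
    Decidable (Conflicting P a b) := by unfold Conflicting; infer_instance

/-- The second voter's ranking in the base profile: `b a d c`. -/
def rkBADC : Fin 4 ≃ Fin 4 := (Equiv.swap 0 1).trans (Equiv.swap 2 3)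

/-- Base profile: voter 0 ranks `a b c d`, voter 1 ranks `b a d c`. -/
def Q0 : Profile (Fin 2) (Fin 4) 4 := ![Equiv.refl _, rkBADC]

/-- Swapped profile: voter 0 ranks `a c b d`, voter 1 ranks `b a d c`. -/
def Q1 : Profile (Fin 2) (Fin 4) 4 := ![Equiv.swap 1 2, rkBADC]

lemma dom_Q1_01 : MatchingDominates Q1 1 2 0 1 := by
  refine ⟨by decide, by decide, Equiv.swap 0 1, by decide, by decide, by decide, by decide⟩

lemma dom_Q1_23 : MatchingDominates Q1 1 2 2 3 := by
  refine ⟨by decide, by decide, Equiv.swap 0 1, by decide, by decide, by decide, by decide⟩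

lemma asi_Q_01 : AdjacentSwapIncrease Q0 Q1 0 1 := by
  refine ⟨0, by decide, 1, 2, Or.inr rfl, by decide, by decide, by decide, by decide⟩

lemma asi_Q_23 : AdjacentSwapIncrease Q0 Q1 2 3 := by
  refine ⟨0, by decide, 2, 1, Or.inl rfl, by decide, by decide, by decide, by decide⟩

/-- The concrete (`Fin 2`, `Fin 4`) version of the impossibility theorem. -/
theorem fin_no_rule :
    ¬ ∃ R : Profile (Fin 2) (Fin 4) 4 → Finset (Finset (Fin 4)),
        (∀ P, (R P).Nonempty) ∧
        (∀ P, ∀ W ∈ R P, W.card = 2) ∧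
        (∀ P (a b x y : Fin 4), MatchingDominates P a b x y → ({x, y} : Finset (Fin 4)) ∉ R P) ∧
        (∀ P, (∃ a b : Fin 4, a ≠ b ∧ Conflicting P a b) →
          ∀ W ∈ R P, ∃ a b : Fin 4, a ≠ b ∧ W = {a, b} ∧ Conflicting P a b) ∧
        (∀ P P' (a b : Fin 4), a ≠ b → ({a, b} : Finset (Fin 4)) ∈ R P →
          AdjacentSwapIncrease P P' a b → ({a, b} : Finset (Fin 4)) ∈ R P') := by
  rintro ⟨R, hne, -, hdom, hcon, hmono⟩
  obtain ⟨W, hW⟩ := hne Q0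
  obtain ⟨a, b, hab, rfl, hconf⟩ := hcon Q0 ⟨0, 1, by decide, by decide⟩ W hW
  have key0 : ∀ a b : Fin 4, a ≠ b → Conflicting Q0 a b →
      ({a, b} : Finset (Fin 4)) = {0, 1} ∨ ({a, b} : Finset (Fin 4)) = {2, 3} := by decide
  have key := key0 a b hab hconf
  rcases key with h | h
  · rw [h] at hW
    exact hdom Q1 1 2 0 1 dom_Q1_01 (hmono Q0 Q1 0 1 (by decide) hW asi_Q_01)
  · rw [h] at hW
    exact hdom Q1 1 2 2 3 dom_Q1_23 (hmono Q0 Q1 2 3 (by decide) hW asi_Q_23)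

section Transport

variable {V C : Type*} [Fintype V] [DecidableEq V] [Fintype C] [DecidableEq C]

lemma swap_conj {α β : Type*} [DecidableEq α] [DecidableEq β] (e : α ≃ β) (a b x : α) :
    Equiv.swap (e a) (e b) (e x) = e (Equiv.swap a b x) := by
  simp [Equiv.swap_apply_def, e.injective.eq_iff, apply_ite e]

/-- Transport of a concrete profile to the abstract voter/candidate types. -/
def T (hC : Fintype.card C = 4) (eV : Fin 2 ≃ V) (eC : Fin 4 ≃ C)
    (P : Profile (Fin 2) (Fin 4) 4) : Profile V C (Fintype.card C) :=
  fun v => (eC.symm.trans (P (eV.symm v))).trans (finCongr hC.symm)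

variable (hC : Fintype.card C = 4) (eV : Fin 2 ≃ V) (eC : Fin 4 ≃ C)

lemma T_dpos (P : Profile (Fin 2) (Fin 4) 4) (v : V) (a b : C) :
    dpos (T hC eV eC P v) a b = dpos (P (eV.symm v)) (eC.symm a) (eC.symm b) := rfl

lemma T_mem_Vab (P : Profile (Fin 2) (Fin 4) 4) (v : V) (a b : C) :
    v ∈ Vab (T hC eV eC P) a b ↔ eV.symm v ∈ Vab P (eC.symm a) (eC.symm b) := by
  simp only [Vab, Finset.mem_filter, Finset.mem_univ, true_and]
  exact Iff.rfl

lemma T_conflicting (P : Profile (Fin 2) (Fin 4) 4) (a b : C) :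
    Conflicting (T hC eV eC P) a b ↔ Conflicting P (eC.symm a) (eC.symm b) := by
  constructor
  · rintro ⟨⟨u, hu⟩, ⟨w, hw⟩⟩
    exact ⟨⟨eV.symm u, (T_mem_Vab hC eV eC P u a b).1 hu⟩,
      ⟨eV.symm w, (T_mem_Vab hC eV eC P w b a).1 hw⟩⟩
  · rintro ⟨⟨u, hu⟩, ⟨w, hw⟩⟩
    refine ⟨⟨eV u, ?_⟩, ⟨eV w, ?_⟩⟩
    · rw [T_mem_Vab]; simpa using hu
    · rw [T_mem_Vab]; simpa using hw

lemma T_conflicting' (P : Profile (Fin 2) (Fin 4) 4) (a b : Fin 4) :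
    Conflicting P a b ↔ Conflicting (T hC eV eC P) (eC a) (eC b) := by
  rw [T_conflicting]; simp

lemma T_dom (P : Profile (Fin 2) (Fin 4) 4) (p q x y : Fin 4)
    (h : MatchingDominates P p q x y) :
    MatchingDominates (T hC eV eC P) (eC p) (eC q) (eC x) (eC y) := by
  obtain ⟨h1, h2, f, hf1, hf2, hf3, ⟨v0, hf4⟩⟩ := h
  refine ⟨(T_conflicting' hC eV eC P p q).1 h1, (T_conflicting' hC eV eC P x y).1 h2,
    (eV.symm.trans f).trans eV, ?_, ?_, ?_, ?_⟩
  · intro v hv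
    rw [T_mem_Vab] at hv ⊢
    simp only [Equiv.trans_apply, Equiv.symm_apply_apply] at hv ⊢
    exact hf1 _ hv
  · intro v hv
    rw [T_mem_Vab] at hv ⊢
    simp only [Equiv.trans_apply, Equiv.symm_apply_apply] at hv ⊢
    exact hf2 _ hv
  · intro v
    have := hf3 (eV.symm v)
    simp only [T_dpos, Equiv.trans_apply, Equiv.symm_apply_apply]
    simpa using this
  · refine ⟨eV v0, ?_⟩
    simp only [T_dpos, Equiv.trans_apply, Equiv.symm_apply_apply]
    simpa using hf4

lemma T_asi (P P' : Profile (Fin 2) (Fin 4) 4) (a b : Fin 4)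
    (h : AdjacentSwapIncrease P P' a b) :
    AdjacentSwapIncrease (T hC eV eC P) (T hC eV eC P') (eC a) (eC b) := by
  obtain ⟨w, hoth, c, e, hc, hec, hadj, hswap, hdist⟩ := h
  refine ⟨eV w, ?_, eC c, eC e, ?_, eC.injective.ne hec, ?_, ?_, ?_⟩
  · intro v hv
    have hvw : eV.symm v ≠ w := by
      intro hh; exact hv (by rw [← hh, Equiv.apply_symm_apply])
    show (eC.symm.trans (P' (eV.symm v))).trans _ = (eC.symm.trans (P (eV.symm v))).trans _
    rw [hoth _ hvw]
  · rcases hc with h | h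
    · exact Or.inl (by rw [h])
    · exact Or.inr (by rw [h])
  · rw [T_dpos]
    simpa using hadj
  · apply Equiv.ext
    intro x
    simp only [T, Equiv.trans_apply, Equiv.symm_apply_apply, hswap, swap_conj]
  · have e1 : dpos ((T hC eV eC P') (eV w)) (eC a) (eC b) = dpos (P' w) a b := by
      rw [T_dpos]; simp
    have e2 : dpos ((T hC eV eC P) (eV w)) (eC a) (eC b) = dpos (P w) a b := by
      rw [T_dpos]; simp
    rw [e1, e2, hdist]

lemma image_pair_back {W : Finset C} {x y : Fin 4} (h : W.image eC.symm = {x, y}) :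
    W = {eC x, eC y} := by
  have := congrArg (Finset.image eC) h
  simpa [Finset.image_image, Finset.image_insert, Finset.image_singleton,
    Function.comp] using this

end Transport

end Aux

/-- For a candidate set `C` with `|C| = 4` and a voter set `V` with
`|V| = 2`, there is no committee rule over `(V, C)` satisfying matching domination,
conflict consistency, and conflict monotonicity. -/
theorem no_rule_matchingDomination_conflictConsistent_conflictMonotonic
    (V C : Type*) [Fintype V] [DecidableEq V] [Fintype C] [DecidableEq C]
    (hV : Fintype.card V = 2) (hC : Fintype.card C = 4) :
    ¬ ∃ R : Profile V C (Fintype.card C) → Finset (Finset C),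
        (∀ P, (R P).Nonempty) ∧
        (∀ P, ∀ W ∈ R P, W.card = 2) ∧
        -- matching domination: a matching-dominated pair is never selected
        (∀ P (a b x y : C), MatchingDominates P a b x y → ({x, y} : Finset C) ∉ R P) ∧
        -- conflict consistency
        (∀ P, (∃ a b : C, a ≠ b ∧ Conflicting P a b) →
          ∀ W ∈ R P, ∃ a b : C, a ≠ b ∧ W = {a, b} ∧ Conflicting P a b) ∧
        -- conflict monotonicity
        (∀ P P' (a b : C), a ≠ b → ({a, b} : Finset C) ∈ R P →
          AdjacentSwapIncrease P P' a b → ({a, b} : Finset C) ∈ R P') := by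
  rintro ⟨R, h1, h2, h3, h4, h5⟩
  have eV : Fin 2 ≃ V := (Fintype.equivFinOfCardEq hV).symm
  have eC : Fin 4 ≃ C := (Fintype.equivFinOfCardEq hC).symm
  apply fin_no_rule
  refine ⟨fun P => (R (T hC eV eC P)).image (fun W => W.image eC.symm),
    ?_, ?_, ?_, ?_, ?_⟩
  · intro P; exact (h1 _).image _
  · intro P W' hW'
    obtain ⟨W, hWmem, rfl⟩ := Finset.mem_image.1 hW'
    rw [Finset.card_image_of_injective _ eC.symm.injective]
    exact h2 _ W hWmem
  · intro P p q x y hdom hmem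
    obtain ⟨W, hWmem, hWeq⟩ := Finset.mem_image.1 hmem
    have hW : W = {eC x, eC y} := image_pair_back eC hWeq
    rw [hW] at hWmem
    exact h3 _ _ _ _ _ (T_dom hC eV eC P p q x y hdom) hWmem
  · intro P hconf W' hW'
    obtain ⟨a, b, hab, hc⟩ := hconf
    obtain ⟨W, hWmem, rfl⟩ := Finset.mem_image.1 hW'
    obtain ⟨a', b', hab', hWeq, hc'⟩ := h4 (T hC eV eC P)
      ⟨eC a, eC b, eC.injective.ne hab, (T_conflicting' hC eV eC P a b).1 hc⟩ W hWmem
    refine ⟨eC.symm a', eC.symm b', eC.symm.injective.ne hab', ?_, ?_⟩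
    · rw [hWeq]; simp [Finset.image_insert, Finset.image_singleton]
    · exact (T_conflicting hC eV eC P a' b').1 hc'
  · intro P P' a b hab hmem hswap
    obtain ⟨W, hWmem, hWeq⟩ := Finset.mem_image.1 hmem
    have hW : W = {eC a, eC b} := image_pair_back eC hWeq
    rw [hW] at hWmem
    have := h5 (T hC eV eC P) (T hC eV eC P') (eC a) (eC b) (eC.injective.ne hab)
      hWmem (T_asi hC eV eC P P' a b hswap)
    refine Finset.mem_image.2 ⟨{eC a, eC b}, this, ?_⟩
    simp [Finset.image_insert, Finset.image_singleton]
end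

section
/- The MaxSum rule is reverse stable: for every profile P, MaxSum(P) = MaxSum(P̄), where P̄ is the profile obtained from P by reversing every voter's ranking (the candidate at position i moves to position m+1−i). -/
open Finset

/-- The MaxSum score of the pair `{a,b}`:
`|V^{b≻a}| · Σ_{v∈V^{a≻b}} v(ab) + |V^{a≻b}| · Σ_{v∈V^{b≻a}} v(ba)`. -/
def sumScore {V C : Type*} {m : ℕ} [Fintype V] (P : Profile V C m) (a b : C) : ℤ :=
  (Vab P b a).card * ∑ v ∈ Vab P a b, dpos (P v) a b
    + (Vab P a b).card * ∑ v ∈ Vab P b a, dpos (P v) b a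

/-- `{a,b} ∈ MaxSum(P)`: a pair of distinct candidates whose MaxSum score is maximal
among all pairs of distinct candidates. -/
def maxSumSel {V C : Type*} {m : ℕ} [Fintype V] (P : Profile V C m) (a b : C) : Prop :=
  a ≠ b ∧ ∀ x y : C, x ≠ y → sumScore P x y ≤ sumScore P a b

/-- The reversed profile: every voter's ranking is reversed, i.e., the candidate at
position `i` (1-based) moves to position `m + 1 - i`. -/
def reverseProfile {V C : Type*} {m : ℕ} (P : Profile V C m) : Profile V C m :=
  fun v => (P v).trans Fin.revPerm

lemma Vab_rev {V C : Type*} {m : ℕ} [Fintype V] (P : Profile V C m) (a b : C) :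
    Vab (reverseProfile P) a b = Vab P b a := by
  ext v
  simp [Vab, reverseProfile, Fin.rev_lt_rev]

lemma dpos_rev {C : Type*} {m : ℕ} (r : C ≃ Fin m) (a b : C) :
    dpos (r.trans Fin.revPerm) a b = dpos r b a := by
  have ha := (r a).isLt
  have hb := (r b).isLt
  simp only [dpos, Equiv.trans_apply, Fin.revPerm_apply, Fin.val_rev]
  omega

lemma sumScore_rev {V C : Type*} {m : ℕ} [Fintype V] (P : Profile V C m) (a b : C) :
    sumScore (reverseProfile P) a b = sumScore P a b := by
  simp only [sumScore, Vab_rev]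
  have h1 : ∀ v ∈ Vab P b a, dpos (reverseProfile P v) a b = dpos (P v) b a :=
    fun v _ => dpos_rev (P v) a b
  have h2 : ∀ v ∈ Vab P a b, dpos (reverseProfile P v) b a = dpos (P v) a b :=
    fun v _ => dpos_rev (P v) b a
  rw [Finset.sum_congr rfl h1, Finset.sum_congr rfl h2]
  ring

/-- MaxSum is reverse stable: `MaxSum(P) = MaxSum(P̄)`, where `P̄` is
the profile with every voter's ranking reversed. -/
theorem maxSum_reverseStable {V C : Type*} [Fintype V] {m : ℕ} (P : Profile V C m)
    (a b : C) :
    maxSumSel P a b ↔ maxSumSel (reverseProfile P) a b := by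
  unfold maxSumSel
  simp only [sumScore_rev]
end

section
/- The MaxSum rule is conflict consistent: for every profile P that contains at least one conflicting pair of candidates, every pair in MaxSum(P) is conflicting. -/
open Finset

lemma sum_dpos_pos {V C : Type*} {m : ℕ} [Fintype V] (P : Profile V C m) (a b : C)
    (h : (Vab P a b).Nonempty) : 0 < ∑ v ∈ Vab P a b, dpos (P v) a b := by
  apply Finset.sum_pos _ h
  intro v hv
  simp only [Vab, Finset.mem_filter] at hv
  have : (P v a : ℕ) < (P v b : ℕ) := hv.2
  simp only [dpos]
  omega

lemma score_zero_of_not_conflicting {V C : Type*} {m : ℕ} [Fintype V] (P : Profile V C m)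
    (a b : C) (h : ¬ Conflicting P a b) : sumScore P a b = 0 := by
  rw [Conflicting, not_and_or] at h
  rcases h with h | h
  · rw [Finset.not_nonempty_iff_eq_empty] at h
    simp [sumScore, h]
  · rw [Finset.not_nonempty_iff_eq_empty] at h
    simp [sumScore, h]

/-- maxSum is conflict consistent: if the profile contains at least one
conflicting pair of candidates, then every selected pair is conflicting. -/
theorem maxSum_conflictConsistent {V C : Type*} [Fintype V] {m : ℕ} (P : Profile V C m)
    (hconf : ∃ x y : C, x ≠ y ∧ Conflicting P x y)
    (a b : C) (hsel : maxSumSel P a b) :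
    Conflicting P a b := by
  obtain ⟨x, y, hxy, hx, hy⟩ := hconf
  have hxpos : 0 < sumScore P x y := by
    have h1 := sum_dpos_pos P x y hx
    have h2 := sum_dpos_pos P y x hy
    have c1 : 0 < ((Vab P x y).card : ℤ) := by exact_mod_cast Finset.card_pos.mpr hx
    have c2 : 0 < ((Vab P y x).card : ℤ) := by exact_mod_cast Finset.card_pos.mpr hy
    have := mul_pos c2 h1
    have := mul_pos c1 h2
    rw [sumScore]; positivity
  by_contra hc
  have := score_zero_of_not_conflicting P a b hc
  have := hsel.2 x y hxy
  omega
end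

section
/- The MaxSum rule is antagonization consistent: for every profile P and every pair {a,b} ∈ MaxSum(P), the pair {a,b} also belongs to MaxSum(P^{ab}), where P^{ab} is the antagonization of P with respect to {a,b}. -/
open Finset

/-- `Q` is the antagonization `P^{ab}` of `P` with respect to the pair of distinct
candidates `{a,b}`: every voter of `V^{a≻b}` ranks `a` first (1-based position `1`,
i.e. `Fin`-value `0`) and `b` last (1-based position `m`, i.e. `Fin`-value `m - 1`),
every voter of `V^{b≻a}` ranks `b` first and `a` last, and each voter's relative
order over the remaining candidates is the same as in `P`. -/
def IsAntagonization {V C : Type*} {m : ℕ} (P Q : Profile V C m) (a b : C) : Prop :=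
  (∀ v : V, P v a < P v b → (Q v a : ℕ) = 0 ∧ (Q v b : ℕ) = m - 1) ∧
  (∀ v : V, P v b < P v a → (Q v b : ℕ) = 0 ∧ (Q v a : ℕ) = m - 1) ∧
  (∀ v : V, ∀ c d : C, c ≠ a → c ≠ b → d ≠ a → d ≠ b →
    (P v c < P v d ↔ Q v c < Q v d))

/-- Key monotonicity lemma: if the candidates with positions strictly in the middle
keep their relative order, the position gap in `s` is at most the gap in `r`. -/
lemma dpos_le_of_mid {C : Type*} {m : ℕ} (r s : C ≃ Fin m) (x y : C)
    (hx0 : (s x : ℕ) ≠ 0) (hy1 : (s y : ℕ) ≠ m - 1)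
    (hext : ∀ c : C, 1 ≤ (s c : ℕ) → (s c : ℕ) ≤ m - 2 →
      ((r c < r x ↔ s c < s x) ∧ (r c < r y ↔ s c < s y)))
    (hxy : r x < r y) (hxy' : s x < s y) :
    dpos s x y ≤ dpos r x y := by
  have hsub : (Finset.Ico (s x) (s y)).image (fun j => r (s.symm j)) ⊆
      Finset.Ico (r x) (r y) := by
    intro i hi
    simp only [Finset.mem_image] at hi
    obtain ⟨j, hj, rfl⟩ := hi
    rw [Finset.mem_Ico] at hj ⊢
    set c := s.symm j with hc
    have hsc : s c = j := s.apply_symm_apply j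
    have h1 : 1 ≤ (s c : ℕ) := by
      rw [hsc]
      have := hj.1
      rw [Fin.le_def] at this
      omega
    have h2 : (s c : ℕ) ≤ m - 2 := by
      rw [hsc]
      have h3 := hj.2
      rw [Fin.lt_def] at h3
      have h4 := (s y).isLt
      omega
    obtain ⟨hix, hiy⟩ := hext c h1 h2
    constructor
    · by_contra hcon
      push_neg at hcon
      have : s c < s x := hix.mp hcon
      rw [hsc] at this
      exact absurd hj.1 (not_le_of_gt this)
    · exact hiy.mpr (by rw [hsc]; exact hj.2)
  have hcard : (Finset.Ico (s x) (s y)).card ≤ (Finset.Ico (r x) (r y)).card := by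
    calc (Finset.Ico (s x) (s y)).card
        = ((Finset.Ico (s x) (s y)).image (fun j => r (s.symm j))).card :=
          (Finset.card_image_of_injective _
            (fun i j h => s.symm.injective (r.injective h))).symm
      _ ≤ _ := Finset.card_le_card hsub
  rw [Fin.card_Ico, Fin.card_Ico] at hcard
  rw [Fin.lt_def] at hxy hxy'
  simp only [dpos]
  omega

/-- maxSum is antagonization consistent: if the pair `{a,b}` is
selected by maxSum in `P`, then it is also selected in the antagonization `P^{ab}`. -/
theorem maxSum_antagonizationConsistent {V C : Type*} [Fintype V] {m : ℕ}
    (P Q : Profile V C m) (a b : C) (hab : a ≠ b)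
    (hQ : IsAntagonization P Q a b) (hsel : maxSumSel P a b) :
    maxSumSel Q a b := by
  obtain ⟨h1, h2, h3⟩ := hQ
  obtain ⟨-, hmax⟩ := hsel
  have tri : ∀ v : V, P v a < P v b ∨ P v b < P v a := by
    intro v
    rcases lt_trichotomy (P v a) (P v b) with h | h | h
    · exact Or.inl h
    · exact absurd ((P v).injective h) hab
    · exact Or.inr h
  have fa : ∀ v : V, P v a < P v b →
      (Q v a : ℕ) = 0 ∧ (Q v b : ℕ) = m - 1 ∧ 2 ≤ m := by
    intro v hv
    obtain ⟨e0, e1⟩ := h1 v hv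
    have hne : (Q v a : ℕ) ≠ (Q v b : ℕ) := fun h => hab ((Q v).injective (Fin.ext h))
    have := (Q v b).isLt
    exact ⟨e0, e1, by omega⟩
  have fb : ∀ v : V, P v b < P v a →
      (Q v b : ℕ) = 0 ∧ (Q v a : ℕ) = m - 1 ∧ 2 ≤ m := by
    intro v hv
    obtain ⟨e0, e1⟩ := h2 v hv
    have hne : (Q v a : ℕ) ≠ (Q v b : ℕ) := fun h => hab ((Q v).injective (Fin.ext h))
    have := (Q v a).isLt
    exact ⟨e0, e1, by omega⟩
  have fm : ∀ (v : V) (c : C), c ≠ a → c ≠ b →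
      1 ≤ (Q v c : ℕ) ∧ (Q v c : ℕ) ≤ m - 2 ∧ 2 ≤ m := by
    intro v c hca hcb
    have hna : (Q v c : ℕ) ≠ (Q v a : ℕ) := fun h => hca ((Q v).injective (Fin.ext h))
    have hnb : (Q v c : ℕ) ≠ (Q v b : ℕ) := fun h => hcb ((Q v).injective (Fin.ext h))
    have hlt := (Q v c).isLt
    rcases tri v with h | h
    · obtain ⟨e0, e1, hm⟩ := fa v h; omega
    · obtain ⟨e0, e1, hm⟩ := fb v h; omega
  have Vq1 : Vab Q a b = Vab P a b := by
    ext v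
    simp only [Vab, mem_filter, mem_univ, true_and, Fin.lt_def]
    rcases tri v with h | h
    · obtain ⟨e0, e1, hm⟩ := fa v h; have h' := Fin.lt_def.mp h; omega
    · obtain ⟨e0, e1, hm⟩ := fb v h; have h' := Fin.lt_def.mp h; omega
  have Vq2 : Vab Q b a = Vab P b a := by
    ext v
    simp only [Vab, mem_filter, mem_univ, true_and, Fin.lt_def]
    rcases tri v with h | h
    · obtain ⟨e0, e1, hm⟩ := fa v h; have h' := Fin.lt_def.mp h; omega
    · obtain ⟨e0, e1, hm⟩ := fb v h; have h' := Fin.lt_def.mp h; omega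
  have Vgen : ∀ (c : C), c ≠ a → c ≠ b → Vab Q a c = Vab P a b ∧ Vab Q c a = Vab P b a ∧
      Vab Q b c = Vab P b a ∧ Vab Q c b = Vab P a b := by
    intro c hca hcb
    refine ⟨?_, ?_, ?_, ?_⟩ <;>
      · ext v
        simp only [Vab, mem_filter, mem_univ, true_and, Fin.lt_def]
        obtain ⟨m1, m2, hm⟩ := fm v c hca hcb
        rcases tri v with h | h
        · obtain ⟨e0, e1, -⟩ := fa v h; have h' := Fin.lt_def.mp h; omega
        · obtain ⟨e0, e1, -⟩ := fb v h; have h' := Fin.lt_def.mp h; omega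
  have dle : ∀ (r : C ≃ Fin m) (x y : C), dpos r x y ≤ (m : ℤ) - 1 := by
    intro r x y
    have h1 := (r y).isLt
    simp only [dpos]
    omega
  have hM1 : ∀ v ∈ Vab P a b, dpos (Q v) a b = (m : ℤ) - 1 := by
    intro v hv
    rw [Vab, mem_filter] at hv
    obtain ⟨e0, e1, hm⟩ := fa v hv.2
    simp only [dpos, e0, e1]
    omega
  have hM2 : ∀ v ∈ Vab P b a, dpos (Q v) b a = (m : ℤ) - 1 := by
    intro v hv
    rw [Vab, mem_filter] at hv
    obtain ⟨e0, e1, hm⟩ := fb v hv.2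
    simp only [dpos, e0, e1]
    omega
  have hQab : sumScore Q a b = (Vab P b a).card * ((Vab P a b).card * ((m : ℤ) - 1))
      + (Vab P a b).card * ((Vab P b a).card * ((m : ℤ) - 1)) := by
    simp only [sumScore, Vq1, Vq2]
    rw [Finset.sum_congr rfl hM1, Finset.sum_congr rfl hM2, Finset.sum_const,
      Finset.sum_const, nsmul_eq_mul, nsmul_eq_mul]
  have hU : ∀ (x y : C), sumScore Q x y ≤ (Vab Q y x).card * ((Vab Q x y).card * ((m : ℤ) - 1))
      + (Vab Q x y).card * ((Vab Q y x).card * ((m : ℤ) - 1)) := by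
    intro x y
    have s1 : ∑ v ∈ Vab Q x y, dpos (Q v) x y ≤ (Vab Q x y).card * ((m : ℤ) - 1) := by
      calc ∑ v ∈ Vab Q x y, dpos (Q v) x y ≤ (Vab Q x y).card • ((m : ℤ) - 1) :=
            Finset.sum_le_card_nsmul _ _ _ (fun v _ => dle (Q v) x y)
        _ = _ := nsmul_eq_mul _ _
    have s2 : ∑ v ∈ Vab Q y x, dpos (Q v) y x ≤ (Vab Q y x).card * ((m : ℤ) - 1) := by
      calc ∑ v ∈ Vab Q y x, dpos (Q v) y x ≤ (Vab Q y x).card • ((m : ℤ) - 1) :=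
            Finset.sum_le_card_nsmul _ _ _ (fun v _ => dle (Q v) y x)
        _ = _ := nsmul_eq_mul _ _
    exact add_le_add (mul_le_mul_of_nonneg_left s1 (Int.natCast_nonneg _))
      (mul_le_mul_of_nonneg_left s2 (Int.natCast_nonneg _))
  have hPle : sumScore P a b ≤ sumScore Q a b := by
    simp only [sumScore, Vq1, Vq2]
    refine add_le_add (mul_le_mul_of_nonneg_left (Finset.sum_le_sum ?_) (Int.natCast_nonneg _))
      (mul_le_mul_of_nonneg_left (Finset.sum_le_sum ?_) (Int.natCast_nonneg _))
    · intro v hv; exact le_of_le_of_eq (dle (P v) a b) (hM1 v hv).symm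
    · intro v hv; exact le_of_le_of_eq (dle (P v) b a) (hM2 v hv).symm
  have comm : ∀ (R : Profile V C m) (x y : C), sumScore R x y = sumScore R y x := by
    intro R x y
    simp only [sumScore]
    exact add_comm _ _
  refine ⟨hab, ?_⟩
  intro x y hxy
  by_cases hxa : x = a
  · subst hxa
    by_cases hyb : y = b
    · subst hyb; exact le_refl _
    · -- the pair {a, c}, i.e. x plays the role of a
      have hya : y ≠ x := fun h => hxy h.symm
      obtain ⟨g1, g2, -, -⟩ := Vgen y hya hyb
      have hu := hU x y
      rw [g1, g2] at hu
      rw [hQab]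
      linarith
  by_cases hxb : x = b
  · subst hxb
    by_cases hya : y = a
    · subst hya; rw [comm Q x y]
    · have hyx : y ≠ x := fun h => hxy h.symm
      obtain ⟨-, -, g3, g4⟩ := Vgen y hya hyx
      have hu := hU x y
      rw [g3, g4] at hu
      rw [hQab]
      linarith
  by_cases hya : y = a
  · subst hya
    have hxy' : x ≠ y := hxy
    obtain ⟨g1, g2, -, -⟩ := Vgen x hxy' hxb
    have hu := hU x y
    rw [g1, g2] at hu
    rw [hQab]
    linarith
  by_cases hyb : y = b
  · subst hyb
    have hxy' : x ≠ y := hxy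
    obtain ⟨-, -, g3, g4⟩ := Vgen x hxa hxy'
    have hu := hU x y
    rw [g3, g4] at hu
    rw [hQab]
    linarith
  -- main case: x, y ∉ {a, b}
  have e1 : Vab Q x y = Vab P x y := by
    ext v
    simp only [Vab, mem_filter, mem_univ, true_and]
    exact (h3 v x y hxa hxb hya hyb).symm
  have e2 : Vab Q y x = Vab P y x := by
    ext v
    simp only [Vab, mem_filter, mem_univ, true_and]
    exact (h3 v y x hya hyb hxa hxb).symm
  have keyd : ∀ (x' y' : C), x' ≠ a → x' ≠ b → y' ≠ a → y' ≠ b →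
      ∀ v ∈ Vab P x' y', dpos (Q v) x' y' ≤ dpos (P v) x' y' := by
    intro x' y' hxa' hxb' hya' hyb' v hv
    rw [Vab, mem_filter] at hv
    have hv' := hv.2
    obtain ⟨mx1, mx2, hm⟩ := fm v x' hxa' hxb'
    obtain ⟨my1, my2, -⟩ := fm v y' hya' hyb'
    refine dpos_le_of_mid (P v) (Q v) x' y' (by omega) (by omega) ?_ hv'
      ((h3 v x' y' hxa' hxb' hya' hyb').mp hv')
    intro c hc1 hc2
    have hca : c ≠ a := by
      intro h; subst h
      rcases tri v with h | h
      · obtain ⟨e0, -, -⟩ := fa v h; omega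
      · obtain ⟨-, e1, -⟩ := fb v h; omega
    have hcb : c ≠ b := by
      intro h; subst h
      rcases tri v with h | h
      · obtain ⟨-, e1, -⟩ := fa v h; omega
      · obtain ⟨e0, -, -⟩ := fb v h; omega
    exact ⟨h3 v c x' hca hcb hxa' hxb', h3 v c y' hca hcb hya' hyb'⟩
  have step1 : sumScore Q x y ≤ sumScore P x y := by
    simp only [sumScore, e1, e2]
    refine add_le_add (mul_le_mul_of_nonneg_left (Finset.sum_le_sum ?_) (Int.natCast_nonneg _))
      (mul_le_mul_of_nonneg_left (Finset.sum_le_sum ?_) (Int.natCast_nonneg _))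
    · exact keyd x y hxa hxb hya hyb
    · exact keyd y x hya hyb hxa hxb
  exact le_trans step1 (le_trans (hmax x y hxy) hPle)
end

section
/- The MaxNash rule is antagonization consistent: for every profile P and every pair {a,b} ∈ MaxNash(P), the pair {a,b} also belongs to MaxNash(P^{ab}), where P^{ab} is the antagonization of P with respect to {a,b}. -/
open Finset

/-- The MaxNash score of the pair `{a,b}`:
`(Σ_{v∈V^{a≻b}} v(ab)) · (Σ_{v∈V^{b≻a}} v(ba))`. -/
def nashScore {V C : Type*} {m : ℕ} [Fintype V] (P : Profile V C m) (a b : C) : ℤ :=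
  (∑ v ∈ Vab P a b, dpos (P v) a b) * ∑ v ∈ Vab P b a, dpos (P v) b a

/-- `{a,b} ∈ MaxNash(P)`: a pair of distinct candidates whose MaxNash score is maximal
among all pairs of distinct candidates. -/
def maxNashSel {V C : Type*} {m : ℕ} [Fintype V] (P : Profile V C m) (a b : C) : Prop :=
  a ≠ b ∧ ∀ x y : C, x ≠ y → nashScore P x y ≤ nashScore P a b

section Helpers

open Finset

private lemma dpos_eq_card' {C : Type*} [Fintype C] {m : ℕ} (r : C ≃ Fin m) {x y : C}
    (h : r x < r y) :
    dpos r x y = ((univ.filter (fun c => r x < r c ∧ r c ≤ r y)).card : ℤ) := by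
  have hcard : (univ.filter (fun c => r x < r c ∧ r c ≤ r y)).card
      = (Finset.Ioc (r x) (r y)).card := by
    apply Finset.card_bij (fun c _ => r c)
    · intro c hc; simp only [mem_filter] at hc; simp [Finset.mem_Ioc, hc.2.1, hc.2.2]
    · intro c hc d hd hcd; exact r.injective hcd
    · intro i hi
      refine ⟨r.symm i, ?_, by simp⟩
      simp only [Finset.mem_Ioc] at hi
      simp [hi.1, hi.2]
  rw [hcard, Fin.card_Ioc]
  have hlt := h
  rw [Fin.lt_def] at hlt
  unfold dpos
  push_cast [Nat.cast_sub (le_of_lt hlt)]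
  ring

private lemma top_bot' {C : Type*} {m : ℕ} (r : C ≃ Fin m) {a b : C}
    (h0 : (r a : ℕ) = 0) (h1 : (r b : ℕ) = m - 1) :
    (∀ c, c ≠ a → r a < r c) ∧ (∀ c, c ≠ b → r c < r b) := by
  constructor
  · intro c hc
    have hne : (r c : ℕ) ≠ (r a : ℕ) := by
      intro h; exact hc (r.injective (Fin.val_injective h))
    rw [Fin.lt_def]; omega
  · intro c hc
    have hne : (r c : ℕ) ≠ (r b : ℕ) := by
      intro h; exact hc (r.injective (Fin.val_injective h))
    have hlt : (r c : ℕ) < m := (r c).is_lt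
    rw [Fin.lt_def]; omega

private lemma sum_dpos_bounds' {V C : Type*} [Fintype V] {m : ℕ} (R : Profile V C m) (x y : C) :
    0 ≤ ∑ v ∈ Vab R x y, dpos (R v) x y ∧
    ∑ v ∈ Vab R x y, dpos (R v) x y ≤ (Vab R x y).card * ((m : ℤ) - 1) := by
  constructor
  · apply Finset.sum_nonneg
    intro v hv
    simp only [Vab, mem_filter, Fin.lt_def] at hv
    unfold dpos; omega
  · have := Finset.sum_le_card_nsmul (Vab R x y) (fun v => dpos (R v) x y) ((m : ℤ) - 1)
      (fun v _ => by
        show dpos (R v) x y ≤ (m : ℤ) - 1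
        have h1 : ((R v) y : ℕ) < m := ((R v) y).is_lt
        unfold dpos; omega)
    simpa [nsmul_eq_mul] using this

private lemma nashScore_le_bound' {V C : Type*} [Fintype V] {m : ℕ} (R : Profile V C m)
    (x y : C) :
    nashScore R x y ≤ ((Vab R x y).card * ((m : ℤ) - 1)) * ((Vab R y x).card * ((m : ℤ) - 1)) := by
  obtain ⟨h1, h2⟩ := sum_dpos_bounds' R x y
  obtain ⟨h3, h4⟩ := sum_dpos_bounds' R y x
  exact mul_le_mul h2 h4 h3 (le_trans h1 h2)

end Helpers

/-- maxNash is antagonization consistent: if the pair `{a,b}` is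
selected by maxNash in `P`, then it is also selected in the antagonization `P^{ab}`. -/
theorem maxNash_antagonizationConsistent {V C : Type*} [Fintype V] {m : ℕ}
    (P Q : Profile V C m) (a b : C) (hab : a ≠ b)
    (hQ : IsAntagonization P Q a b) (hsel : maxNashSel P a b) :
    maxNashSel Q a b := by
  obtain ⟨ha, hb, hcd⟩ := hQ
  refine ⟨hab, ?_⟩
  by_cases hV : IsEmpty V
  · intro x y hxy
    haveI := hV
    simp [nashScore, Vab, Finset.univ_eq_empty]
  · haveI : Nonempty V := not_isEmpty_iff.mp hV
    obtain ⟨v0⟩ := ‹Nonempty V›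
    letI : Fintype C := Fintype.ofEquiv _ (P v0).symm
    have hm2 : 2 ≤ m := by
      have hne : (P v0 a : ℕ) ≠ (P v0 b : ℕ) := by
        intro h; exact hab ((P v0).injective (Fin.val_injective h))
      have h1 : (P v0 a : ℕ) < m := (P v0 a).is_lt
      have h2 : (P v0 b : ℕ) < m := (P v0 b).is_lt
      omega
    set M : ℤ := (m : ℤ) - 1 with hM
    have htot : ∀ v : V, P v a < P v b ∨ P v b < P v a := fun v =>
      Ne.lt_or_gt (fun h => hab ((P v).injective h))
    have key1 : ∀ v, P v a < P v b →
        (∀ c, c ≠ a → Q v a < Q v c) ∧ (∀ c, c ≠ b → Q v c < Q v b) :=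
      fun v hv => top_bot' (Q v) (ha v hv).1 (ha v hv).2
    have key2 : ∀ v, P v b < P v a →
        (∀ c, c ≠ b → Q v b < Q v c) ∧ (∀ c, c ≠ a → Q v c < Q v a) :=
      fun v hv => top_bot' (Q v) (hb v hv).1 (hb v hv).2
    -- filter computations
    have hVab : Vab Q a b = Vab P a b := by
      ext v
      simp only [Vab, Finset.mem_filter, Finset.mem_univ, true_and]
      constructor
      · intro h
        rcases htot v with hv | hv
        · exact hv
        · exact absurd h (lt_asymm ((key2 v hv).2 b hab.symm))
      · intro hv; exact (key1 v hv).1 b hab.symm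
    have hVba : Vab Q b a = Vab P b a := by
      ext v
      simp only [Vab, Finset.mem_filter, Finset.mem_univ, true_and]
      constructor
      · intro h
        rcases htot v with hv | hv
        · exact absurd h (lt_asymm ((key1 v hv).1 b hab.symm))
        · exact hv
      · intro hv; exact (key2 v hv).1 a hab
    have hfilters : ∀ y : C, y ≠ a → y ≠ b →
        Vab Q a y = Vab P a b ∧ Vab Q y a = Vab P b a ∧
        Vab Q y b = Vab P a b ∧ Vab Q b y = Vab P b a := by
      intro y hya hyb
      refine ⟨?_, ?_, ?_, ?_⟩ <;>
        · ext v
          simp only [Vab, Finset.mem_filter, Finset.mem_univ, true_and]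
          constructor
          · intro h
            rcases htot v with hv | hv
            · first
              | exact hv
              | exact absurd h (lt_asymm ((key1 v hv).1 y hya))
              | exact absurd h (lt_asymm ((key1 v hv).2 y hyb))
            · first
              | exact hv
              | exact absurd h (lt_asymm ((key2 v hv).1 y hyb))
              | exact absurd h (lt_asymm ((key2 v hv).2 y hya))
          · intro hv
            first
            | exact (key1 v hv).1 y hya
            | exact (key1 v hv).2 y hyb
            | exact (key2 v hv).1 y hyb
            | exact (key2 v hv).2 y hya
    -- the score of {a,b} in Q
    have hscoreQ : nashScore Q a b =
        ((Vab P a b).card * M) * ((Vab P b a).card * M) := by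
      unfold nashScore
      rw [hVab, hVba]
      have e1 : ∀ v ∈ Vab P a b, dpos (Q v) a b = M := by
        intro v hv
        simp only [Vab, Finset.mem_filter, Finset.mem_univ, true_and] at hv
        obtain ⟨h0, h1⟩ := ha v hv
        unfold dpos
        rw [h0, h1, hM]
        push_cast [Nat.cast_sub (by omega : 1 ≤ m)]
        ring
      have e2 : ∀ v ∈ Vab P b a, dpos (Q v) b a = M := by
        intro v hv
        simp only [Vab, Finset.mem_filter, Finset.mem_univ, true_and] at hv
        obtain ⟨h0, h1⟩ := hb v hv
        unfold dpos
        rw [h0, h1, hM]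
        push_cast [Nat.cast_sub (by omega : 1 ≤ m)]
        ring
      rw [Finset.sum_congr rfl e1, Finset.sum_congr rfl e2,
        Finset.sum_const, Finset.sum_const, nsmul_eq_mul, nsmul_eq_mul]
    have hPN : nashScore P a b ≤ nashScore Q a b := by
      rw [hscoreQ]; exact nashScore_le_bound' P a b
    -- main goal
    intro x y hxy
    by_cases hxa : x = a
    · by_cases hyb : y = b
      · rw [hxa, hyb]
      · have hya : y ≠ a := fun h => hxy (by rw [hxa, h])
        obtain ⟨e1, e2, _, _⟩ := hfilters y hya hyb
        rw [hxa]
        calc nashScore Q a y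
            ≤ ((Vab Q a y).card * M) * ((Vab Q y a).card * M) := nashScore_le_bound' Q a y
          _ = ((Vab P a b).card * M) * ((Vab P b a).card * M) := by rw [e1, e2]
          _ = nashScore Q a b := hscoreQ.symm
    · by_cases hxb : x = b
      · by_cases hya : y = a
        · rw [hxb, hya]
          apply le_of_eq
          unfold nashScore
          ring
        · have hyb : y ≠ b := fun h => hxy (by rw [hxb, h])
          obtain ⟨_, _, e3, e4⟩ := hfilters y hya hyb
          rw [hxb]
          calc nashScore Q b y
              ≤ ((Vab Q b y).card * M) * ((Vab Q y b).card * M) := nashScore_le_bound' Q b y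
            _ = ((Vab P b a).card * M) * ((Vab P a b).card * M) := by rw [e4, e3]
            _ = nashScore Q a b := by rw [hscoreQ]; ring
      · by_cases hya : y = a
        · obtain ⟨e1, e2, _, _⟩ := hfilters x hxa hxb
          rw [hya]
          calc nashScore Q x a
              ≤ ((Vab Q x a).card * M) * ((Vab Q a x).card * M) := nashScore_le_bound' Q x a
            _ = ((Vab P b a).card * M) * ((Vab P a b).card * M) := by rw [e2, e1]
            _ = nashScore Q a b := by rw [hscoreQ]; ring
        · by_cases hyb : y = b
          · obtain ⟨_, _, e3, e4⟩ := hfilters x hxa hxb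
            rw [hyb]
            calc nashScore Q x b
                ≤ ((Vab Q x b).card * M) * ((Vab Q b x).card * M) := nashScore_le_bound' Q x b
              _ = ((Vab P a b).card * M) * ((Vab P b a).card * M) := by rw [e3, e4]
              _ = nashScore Q a b := hscoreQ.symm
          · -- x, y both different from a and b
            have hmono : ∀ (x' y' : C), x' ≠ a → x' ≠ b → y' ≠ a → y' ≠ b →
                ∀ v ∈ Vab P x' y', dpos (Q v) x' y' ≤ dpos (P v) x' y' := by
              intro x' y' hx'a hx'b hy'a hy'b v hv
              simp only [Vab, Finset.mem_filter, Finset.mem_univ, true_and] at hv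
              have hQxy : Q v x' < Q v y' := (hcd v x' y' hx'a hx'b hy'a hy'b).mp hv
              rw [dpos_eq_card' (P v) hv, dpos_eq_card' (Q v) hQxy]
              have hsub : (Finset.univ.filter (fun c => Q v x' < Q v c ∧ Q v c ≤ Q v y')) ⊆
                  (Finset.univ.filter (fun c => P v x' < P v c ∧ P v c ≤ P v y')) := by
                intro c hc
                simp only [Finset.mem_filter, Finset.mem_univ, true_and] at hc ⊢
                by_cases hcy : c = y'
                · subst hcy; exact ⟨hv, le_refl _⟩
                · have hclt : Q v c < Q v y' :=
                    lt_of_le_of_ne hc.2 (fun h => hcy ((Q v).injective h))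
                  have hcab : c ≠ a ∧ c ≠ b := by
                    rcases htot v with hw | hw
                    · constructor
                      · intro h; subst h
                        exact absurd hc.1 (lt_asymm ((key1 v hw).1 x' hx'a))
                      · intro h; subst h
                        exact absurd ((key1 v hw).2 y' hy'b) (lt_asymm hclt)
                    · constructor
                      · intro h; subst h
                        exact absurd ((key2 v hw).2 y' hy'a) (lt_asymm hclt)
                      · intro h; subst h
                        exact absurd hc.1 (lt_asymm ((key2 v hw).1 x' hx'b))
                  refine ⟨(hcd v x' c hx'a hx'b hcab.1 hcab.2).mpr hc.1,
                    le_of_lt ((hcd v c y' hcab.1 hcab.2 hy'a hy'b).mpr hclt)⟩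
              exact_mod_cast Finset.card_le_card hsub
            have hVxy : Vab Q x y = Vab P x y := by
              ext v
              simp only [Vab, Finset.mem_filter, Finset.mem_univ, true_and]
              exact (hcd v x y hxa hxb hya hyb).symm
            have hVyx : Vab Q y x = Vab P y x := by
              ext v
              simp only [Vab, Finset.mem_filter, Finset.mem_univ, true_and]
              exact (hcd v y x hya hyb hxa hxb).symm
            have hQP : nashScore Q x y ≤ nashScore P x y := by
              unfold nashScore
              rw [hVxy, hVyx]
              have b1 : 0 ≤ ∑ v ∈ Vab P x y, dpos (Q v) x y := by
                apply Finset.sum_nonneg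
                intro v hv
                simp only [Vab, Finset.mem_filter, Finset.mem_univ, true_and] at hv
                have := (hcd v x y hxa hxb hya hyb).mp hv
                rw [Fin.lt_def] at this
                unfold dpos; omega
              have b2 : 0 ≤ ∑ v ∈ Vab P y x, dpos (P v) y x := by
                apply Finset.sum_nonneg
                intro v hv
                simp only [Vab, Finset.mem_filter, Finset.mem_univ, true_and,
                  Fin.lt_def] at hv
                unfold dpos; omega
              exact mul_le_mul
                (Finset.sum_le_sum (hmono x y hxa hxb hya hyb))
                (Finset.sum_le_sum (hmono y x hya hyb hxa hxb))
                (by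
                  apply Finset.sum_nonneg
                  intro v hv
                  simp only [Vab, Finset.mem_filter, Finset.mem_univ, true_and] at hv
                  have := (hcd v y x hya hyb hxa hxb).mp hv
                  rw [Fin.lt_def] at this
                  unfold dpos; omega)
                (by
                  apply Finset.sum_nonneg
                  intro v hv
                  simp only [Vab, Finset.mem_filter, Finset.mem_univ, true_and,
                    Fin.lt_def] at hv
                  unfold dpos; omega)
            exact le_trans hQP (le_trans (hsel.2 x y hxy) hPN)
end

section
/- The MaxSwap rule is antagonization consistent: for every profile P and every pair {a,b} ∈ MaxSwap(P), the pair {a,b} also belongs to MaxSwap(P^{ab}), where P^{ab} is the antagonization of P with respect to {a,b}. -/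
open Finset

/-- The MaxSwap score of the pair `{a,b}`:
`min(Σ_{v∈V^{a≻b}} v(ab), Σ_{v∈V^{b≻a}} v(ba))`. -/
def swapScore {V C : Type*} {m : ℕ} [Fintype V] (P : Profile V C m) (a b : C) : ℤ :=
  min (∑ v ∈ Vab P a b, dpos (P v) a b) (∑ v ∈ Vab P b a, dpos (P v) b a)

/-- `{a,b} ∈ MaxSwap(P)`: a pair of distinct candidates whose MaxSwap score is maximal
among all pairs of distinct candidates. -/
def maxSwapSel {V C : Type*} {m : ℕ} [Fintype V] (P : Profile V C m) (a b : C) : Prop :=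
  a ≠ b ∧ ∀ x y : C, x ≠ y → swapScore P x y ≤ swapScore P a b

/-! In `P^{ab}` every voter puts `a` and `b` at the two ends of the ranking, so the score of
`{a,b}` attains the largest value `(m-1) · min(|V^{a≻b}|, |V^{b≻a}|)` compatible with who
prefers whom; in particular it does not decrease. A pair `{a,y}` or `{b,y}` splits the voters
exactly as `{a,b}` does in `P^{ab}`, so its score is bounded by that same value. For two other
candidates `x, y` the split is unchanged while every gap between them shrinks, since `a` and
`b` have left the interval between `x` and `y`; so the score of `{x,y}` is at most its score
in `P`, hence at most that of `{a,b}`. -/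

section Ranking

variable {C : Type*} {m : ℕ}

def RanksFirstLast (s : C ≃ Fin m) (a b : C) : Prop :=
  (s a : ℕ) = 0 ∧ (s b : ℕ) = m - 1

theorem dpos_le (r : C ≃ Fin m) (x y : C) : dpos r x y ≤ m - 1 := by
  have := (r y).isLt
  unfold dpos
  omega

/-- `dpos s x y` counts the positions in `(s x, s y]`, and the hypothesis injects the
candidates at those positions into the positions `(r x, r y]`. -/
theorem dpos_le_dpos_of_forall_between (r s : C ≃ Fin m) {x y : C} (hxy : r x ≤ r y)
    (h : ∀ c, s x < s c → s c ≤ s y → r x < r c ∧ r c ≤ r y) :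
    dpos s x y ≤ dpos r x y := by
  have hcard : #(Ioc (s x) (s y)) ≤ #(Ioc (r x) (r y)) := by
    refine card_le_card_of_injOn (fun k => r (s.symm k)) (fun k hk => ?_)
      (r.injective.comp s.symm.injective).injOn
    rw [mem_coe, mem_Ioc, ← s.apply_symm_apply k] at hk
    simpa using h _ hk.1 hk.2
  rw [Fin.card_Ioc, Fin.card_Ioc] at hcard
  have : (r x : ℕ) ≤ r y := hxy
  unfold dpos
  omega

variable {s : C ≃ Fin m} {a b c : C}

theorem RanksFirstLast.first_lt (h : RanksFirstLast s a b) (hca : c ≠ a) : s a < s c := by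
  obtain ⟨ha, -⟩ := h
  have : (s c : ℕ) ≠ s a := fun he => hca (s.injective (Fin.val_injective he))
  rw [Fin.lt_def]
  omega

theorem RanksFirstLast.lt_last (h : RanksFirstLast s a b) (hcb : c ≠ b) : s c < s b := by
  obtain ⟨-, hb⟩ := h
  have : (s c : ℕ) ≠ s b := fun he => hcb (s.injective (Fin.val_injective he))
  have := (s c).isLt
  rw [Fin.lt_def]
  omega

theorem RanksFirstLast.dpos_eq (h : RanksFirstLast s a b) : dpos s a b = m - 1 := by
  obtain ⟨ha, hb⟩ := h
  have := (s a).isLt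
  unfold dpos
  omega

theorem ranksFirstLast_of_lt (h : RanksFirstLast s a b ∨ RanksFirstLast s b a)
    (hlt : s a < s b) : RanksFirstLast s a b :=
  h.resolve_right fun h' => by rw [Fin.lt_def, h'.1] at hlt; omega

end Ranking

section Score

variable {V C : Type*} [Fintype V] {m : ℕ}

/-- The largest score the pair `{x,y}` could have given who prefers `x` to `y`: every
such voter would rank `x` first and `y` last, and vice versa. -/
def swapScoreBound (R : Profile V C m) (x y : C) : ℤ :=
  min (#(Vab R x y) • ((m : ℤ) - 1)) (#(Vab R y x) • ((m : ℤ) - 1))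

theorem swapScore_comm (R : Profile V C m) (x y : C) : swapScore R x y = swapScore R y x :=
  min_comm _ _

theorem swapScore_le_swapScoreBound (R : Profile V C m) (x y : C) :
    swapScore R x y ≤ swapScoreBound R x y :=
  min_le_min (sum_le_card_nsmul _ _ _ fun _ _ => dpos_le _ _ _)
    (sum_le_card_nsmul _ _ _ fun _ _ => dpos_le _ _ _)

variable {R : Profile V C m} {a b : C}

theorem swapScore_eq_swapScoreBound
    (hR : ∀ v, RanksFirstLast (R v) a b ∨ RanksFirstLast (R v) b a) :
    swapScore R a b = swapScoreBound R a b := by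
  have hgap : ∀ x y, (∀ v, RanksFirstLast (R v) x y ∨ RanksFirstLast (R v) y x) →
      ∑ v ∈ Vab R x y, dpos (R v) x y = #(Vab R x y) • ((m : ℤ) - 1) := by
    intro x y hR
    rw [← sum_const]
    refine sum_congr rfl fun v hv => (ranksFirstLast_of_lt (hR v) ?_).dpos_eq
    simpa [Vab] using hv
  rw [swapScore, swapScoreBound, hgap a b hR, hgap b a fun v => (hR v).symm]

/-- A third candidate `y` is preferred to `a` by exactly the voters preferring `b` to `a`. -/
theorem swapScore_le_of_ranksFirstLast
    (hR : ∀ v, RanksFirstLast (R v) a b ∨ RanksFirstLast (R v) b a) {y : C} (hya : y ≠ a) :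
    swapScore R a y ≤ swapScore R a b := by
  by_cases hyb : y = b
  · rw [hyb]
  have hpref : ∀ v, (R v a < R v y ↔ R v a < R v b) ∧ (R v y < R v a ↔ R v b < R v a) := by
    intro v
    rcases hR v with h | h
    · have hay := h.first_lt hya
      have hab := hay.trans (h.lt_last hyb)
      exact ⟨iff_of_true hay hab, iff_of_false hay.not_gt hab.not_gt⟩
    · have hya' := h.lt_last hya
      have hba := (h.first_lt hyb).trans hya'
      exact ⟨iff_of_false hya'.not_gt hba.not_gt, iff_of_true hya' hba⟩
  have hbound : swapScoreBound R a y = swapScoreBound R a b := by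
    simp only [swapScoreBound, Vab, fun v => (hpref v).1, fun v => (hpref v).2]
  calc swapScore R a y ≤ swapScoreBound R a y := swapScore_le_swapScoreBound R a y
    _ = swapScore R a b := by rw [hbound, swapScore_eq_swapScoreBound hR]

theorem swapScore_le_of_mem_pair
    (hR : ∀ v, RanksFirstLast (R v) a b ∨ RanksFirstLast (R v) b a) {x y : C} (hxy : x ≠ y)
    (hx : x = a ∨ x = b) : swapScore R x y ≤ swapScore R a b := by
  rcases hx with rfl | rfl
  · exact swapScore_le_of_ranksFirstLast hR hxy.symm
  · rw [swapScore_comm R a]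
    exact swapScore_le_of_ranksFirstLast (fun v => (hR v).symm) hxy.symm

theorem swapScore_le_swapScore {R' : Profile V C m} {x y : C}
    (hxy : ∀ v, R v x < R v y ↔ R' v x < R' v y) (hyx : ∀ v, R v y < R v x ↔ R' v y < R' v x)
    (hgap_xy : ∀ v, R' v x < R' v y → dpos (R v) x y ≤ dpos (R' v) x y)
    (hgap_yx : ∀ v, R' v y < R' v x → dpos (R v) y x ≤ dpos (R' v) y x) :
    swapScore R x y ≤ swapScore R' x y := by
  simp only [swapScore, Vab, hxy, hyx]
  exact min_le_min (sum_le_sum fun v hv => hgap_xy v (by simpa using hv))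
    (sum_le_sum fun v hv => hgap_yx v (by simpa using hv))

end Score

namespace IsAntagonization

variable {V C : Type*} {m : ℕ} {P Q : Profile V C m} {a b : C}

theorem symm (hQ : IsAntagonization P Q a b) : IsAntagonization P Q b a :=
  ⟨hQ.2.1, hQ.1, fun v c d hca hcb hda hdb => hQ.2.2 v c d hcb hca hdb hda⟩

theorem ranksFirstLast (hQ : IsAntagonization P Q a b) (hab : a ≠ b) (v : V) :
    RanksFirstLast (Q v) a b ∨ RanksFirstLast (Q v) b a :=
  ((P v).injective.ne hab).lt_or_gt.imp (hQ.1 v) (hQ.2.1 v)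

theorem lt_iff (hQ : IsAntagonization P Q a b) (hab : a ≠ b) (v : V) :
    Q v a < Q v b ↔ P v a < P v b := by
  refine ⟨fun hlt => ?_, fun hlt => RanksFirstLast.first_lt (hQ.1 v hlt) hab.symm⟩
  rcases ((P v).injective.ne hab).lt_or_gt with h | h
  · exact h
  · exact absurd hlt (RanksFirstLast.first_lt (hQ.2.1 v h) hab).not_gt

theorem dpos_le (hQ : IsAntagonization P Q a b) (hab : a ≠ b) (v : V) {x y : C}
    (hxa : x ≠ a) (hxb : x ≠ b) (hya : y ≠ a) (hyb : y ≠ b) (hxy : P v x < P v y) :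
    dpos (Q v) x y ≤ dpos (P v) x y := by
  refine dpos_le_dpos_of_forall_between _ _ hxy.le fun c hxc hcy => ?_
  have hc : c ≠ a ∧ c ≠ b := by
    rcases hQ.ranksFirstLast hab v with h | h
    · exact ⟨fun hca => (h.first_lt hxa).not_gt (hca ▸ hxc),
        fun hcb => (h.lt_last hyb).not_ge (hcb ▸ hcy)⟩
    · exact ⟨fun hca => (h.lt_last hya).not_ge (hca ▸ hcy),
        fun hcb => (h.first_lt hxb).not_gt (hcb ▸ hxc)⟩
  exact ⟨(hQ.2.2 v x c hxa hxb hc.1 hc.2).mpr hxc,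
    not_lt.mp ((hQ.2.2 v y c hya hyb hc.1 hc.2).not.mpr hcy.not_gt)⟩

theorem swapScore_le [Fintype V] (hQ : IsAntagonization P Q a b) (hab : a ≠ b) {x y : C}
    (hxa : x ≠ a) (hxb : x ≠ b) (hya : y ≠ a) (hyb : y ≠ b) :
    swapScore Q x y ≤ swapScore P x y :=
  swapScore_le_swapScore (fun v => (hQ.2.2 v x y hxa hxb hya hyb).symm)
    (fun v => (hQ.2.2 v y x hya hyb hxa hxb).symm)
    (hQ.dpos_le hab · hxa hxb hya hyb) (hQ.dpos_le hab · hya hyb hxa hxb)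

theorem swapScoreBound_eq [Fintype V] (hQ : IsAntagonization P Q a b) (hab : a ≠ b) :
    swapScoreBound Q a b = swapScoreBound P a b := by
  simp only [swapScoreBound, Vab, hQ.lt_iff hab, hQ.symm.lt_iff hab.symm]

theorem swapScore_pair_mono [Fintype V] (hQ : IsAntagonization P Q a b) (hab : a ≠ b) :
    swapScore P a b ≤ swapScore Q a b := by
  rw [swapScore_eq_swapScoreBound (hQ.ranksFirstLast hab), hQ.swapScoreBound_eq hab]
  exact swapScore_le_swapScoreBound P a b

end IsAntagonization

/-- maxSwap is antagonization consistent: if the pair `{a,b}` is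
selected by maxSwap in `P`, then it is also selected in the antagonization `P^{ab}`. -/
theorem maxSwap_antagonizationConsistent {V C : Type*} [Fintype V] {m : ℕ}
    (P Q : Profile V C m) (a b : C) (hab : a ≠ b)
    (hQ : IsAntagonization P Q a b) (hsel : maxSwapSel P a b) :
    maxSwapSel Q a b := by
  refine ⟨hab, fun x y hxy => ?_⟩
  have hR := hQ.ranksFirstLast hab
  by_cases hx : x = a ∨ x = b
  · exact swapScore_le_of_mem_pair hR hxy hx
  by_cases hy : y = a ∨ y = b
  · rw [swapScore_comm]
    exact swapScore_le_of_mem_pair hR hxy.symm hy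
  obtain ⟨hxa, hxb⟩ := not_or.mp hx
  obtain ⟨hya, hyb⟩ := not_or.mp hy
  calc swapScore Q x y ≤ swapScore P x y := hQ.swapScore_le hab hxa hxb hya hyb
    _ ≤ swapScore P a b := hsel.2 x y hxy
    _ ≤ swapScore Q a b := hQ.swapScore_pair_mono hab
end

section
/- The MaxSum rule satisfies matching domination: for every profile P, if a conflicting pair {a,b} matching-dominates a conflicting pair {x,y}, then the MaxSum score of {a,b} is strictly greater than that of {x,y}; in particular {x,y} ∉ MaxSum(P). -/
open Finset

lemma Vab_ne {V C : Type*} {m : ℕ} [Fintype V] {P : Profile V C m} {a b : C}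
    (h : (Vab P a b).Nonempty) : a ≠ b := by
  obtain ⟨v, hv⟩ := h
  simp only [Vab, mem_filter] at hv
  intro hab; subst hab; exact lt_irrefl _ hv.2

lemma Vab_union {V C : Type*} {m : ℕ} [Fintype V] [DecidableEq V] (P : Profile V C m) {a b : C}
    (hab : a ≠ b) : Vab P a b ∪ Vab P b a = Finset.univ := by
  ext v
  simp only [Vab, mem_union, mem_filter, mem_univ, true_and, iff_true]
  rcases lt_trichotomy (P v a) (P v b) with h | h | h
  · exact Or.inl h
  · exact absurd ((P v).injective h) hab
  · exact Or.inr h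

lemma Vab_disj {V C : Type*} {m : ℕ} [Fintype V] (P : Profile V C m) (a b : C) :
    Disjoint (Vab P a b) (Vab P b a) := by
  rw [Finset.disjoint_left]
  intro v hv hv'
  simp only [Vab, mem_filter] at hv hv'
  exact absurd hv.2 (not_lt.2 hv'.2.le)

lemma dpos_pos {V C : Type*} {m : ℕ} [Fintype V] {P : Profile V C m} {a b : C}
    {v : V} (hv : v ∈ Vab P a b) : 0 < dpos (P v) a b := by
  simp only [Vab, mem_filter] at hv
  have : ((P v) a : ℕ) < ((P v) b : ℕ) := hv.2
  simp only [dpos]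
  omega

lemma aux_side {V C : Type*} {m : ℕ} [Fintype V] [DecidableEq V] (P : Profile V C m)
    (a b x y : C) (f : V ≃ V)
    (hab : a ≠ b) (hxy : x ≠ y)
    (h1 : ∀ v ∈ Vab P a b, f v ∈ Vab P x y)
    (h2 : ∀ v ∈ Vab P b a, f v ∈ Vab P y x)
    (hle : ∀ v : V, |dpos (P (f v)) x y| ≤ |dpos (P v) a b|) :
    (Vab P x y).card = (Vab P a b).card ∧
    (Vab P x y).image (fun v => (f.symm v : V)) = Vab P a b ∧
    ∑ v ∈ Vab P x y, dpos (P v) x y ≤ ∑ v ∈ Vab P a b, dpos (P v) a b ∧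
    (∀ v0 ∈ Vab P a b, |dpos (P (f v0)) x y| < |dpos (P v0) a b| →
      ∑ v ∈ Vab P x y, dpos (P v) x y < ∑ v ∈ Vab P a b, dpos (P v) a b) := by
  have hsub1 : (Vab P a b).image f ⊆ Vab P x y := by
    intro w hw
    obtain ⟨v, hv, rfl⟩ := Finset.mem_image.1 hw
    exact h1 v hv
  have hsub2 : (Vab P b a).image f ⊆ Vab P y x := by
    intro w hw
    obtain ⟨v, hv, rfl⟩ := Finset.mem_image.1 hw
    exact h2 v hv
  have hc1 : (Vab P a b).card ≤ (Vab P x y).card := by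
    calc (Vab P a b).card = ((Vab P a b).image f).card :=
          (Finset.card_image_of_injective _ f.injective).symm
      _ ≤ _ := Finset.card_le_card hsub1
  have hc2 : (Vab P b a).card ≤ (Vab P y x).card := by
    calc (Vab P b a).card = ((Vab P b a).image f).card :=
          (Finset.card_image_of_injective _ f.injective).symm
      _ ≤ _ := Finset.card_le_card hsub2
  have htot1 : (Vab P a b).card + (Vab P b a).card = Fintype.card V := by
    rw [← Finset.card_union_of_disjoint (Vab_disj P a b), Vab_union P hab,
      Finset.card_univ]
  have htot2 : (Vab P x y).card + (Vab P y x).card = Fintype.card V := by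
    rw [← Finset.card_union_of_disjoint (Vab_disj P x y), Vab_union P hxy,
      Finset.card_univ]
  have hcard : (Vab P x y).card = (Vab P a b).card := by omega
  have himg : (Vab P a b).image f = Vab P x y := by
    apply Finset.eq_of_subset_of_card_le hsub1
    rw [Finset.card_image_of_injective _ f.injective, hcard]
  have hsum : ∑ v ∈ Vab P x y, dpos (P v) x y
      = ∑ v ∈ Vab P a b, dpos (P (f v)) x y := by
    rw [← himg, Finset.sum_image (fun v _ w _ h => f.injective h)]
  have hpt : ∀ v ∈ Vab P a b, dpos (P (f v)) x y ≤ dpos (P v) a b := by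
    intro v hv
    have h1' := dpos_pos (h1 v hv)
    have h2' := dpos_pos hv
    have := hle v
    rw [abs_of_pos h1', abs_of_pos h2'] at this
    exact this
  refine ⟨hcard, ?_, ?_, ?_⟩
  · rw [← himg, Finset.image_image]
    have : ((fun v => (f.symm v : V)) ∘ f) = id := by
      funext v; simp
    rw [this, Finset.image_id]
  · rw [hsum]; exact Finset.sum_le_sum hpt
  · intro v0 hv0 hlt
    rw [hsum]
    apply Finset.sum_lt_sum hpt
    refine ⟨v0, hv0, ?_⟩
    have h1' := dpos_pos (h1 v0 hv0)
    have h2' := dpos_pos hv0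
    rw [abs_of_pos h1', abs_of_pos h2'] at hlt
    exact hlt

/-- maxSum satisfies matching domination: if the conflicting pair
`{a,b}` matching-dominates the conflicting pair `{x,y}`, then the maxSum score of
`{a,b}` is strictly greater than that of `{x,y}`; in particular `{x,y}` is not
selected by maxSum. -/
theorem maxSum_matchingDomination {V C : Type*} [Fintype V] {m : ℕ}
    (P : Profile V C m) (a b x y : C)
    (h : MatchingDominates P a b x y) :
    sumScore P x y < sumScore P a b ∧ ¬ maxSumSel P x y := by
  classical
  obtain ⟨⟨hab1, hab2⟩, ⟨hxy1, hxy2⟩, f, hf1, hf2, hle, v0, hlt⟩ := h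
  have hab : a ≠ b := Vab_ne hab1
  have hxy : x ≠ y := Vab_ne hxy1
  have habs : ∀ (r : C ≃ Fin m) (c d : C), |dpos r c d| = |dpos r d c| := by
    intro r c d
    have : dpos r c d = -(dpos r d c) := by unfold dpos; ring
    rw [this, abs_neg]
  have hle' : ∀ v : V, |dpos (P (f v)) y x| ≤ |dpos (P v) b a| := by
    intro v; rw [habs (P (f v)) y x, habs (P v) b a]; exact hle v
  obtain ⟨hc1, -, hs1, hstrict1⟩ := aux_side P a b x y f hab hxy hf1 hf2 hle
  obtain ⟨hc2, -, hs2, hstrict2⟩ :=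
    aux_side P b a y x f hab.symm hxy.symm hf2 hf1 hle'
  have hcardA : 0 < ((Vab P a b).card : ℤ) := by
    exact_mod_cast Finset.card_pos.2 hab1
  have hcardB : 0 < ((Vab P b a).card : ℤ) := by
    exact_mod_cast Finset.card_pos.2 hab2
  have hlt' : |dpos (P (f v0)) x y| < |dpos (P v0) a b| := hlt
  have hv0 : v0 ∈ Vab P a b ∪ Vab P b a := by
    rw [Vab_union P hab]; exact Finset.mem_univ v0
  have hmain : sumScore P x y < sumScore P a b := by
    have key : ∑ v ∈ Vab P x y, dpos (P v) x y < ∑ v ∈ Vab P a b, dpos (P v) a b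
        ∨ ∑ v ∈ Vab P y x, dpos (P v) y x < ∑ v ∈ Vab P b a, dpos (P v) b a := by
      rcases Finset.mem_union.1 hv0 with hv | hv
      · exact Or.inl (hstrict1 v0 hv hlt')
      · refine Or.inr (hstrict2 v0 hv ?_)
        rw [habs (P (f v0)) y x, habs (P v0) b a]; exact hlt'
    simp only [sumScore, hc1, hc2]
    rcases key with k | k
    · have t1 : ((Vab P b a).card : ℤ) * ∑ v ∈ Vab P x y, dpos (P v) x y
          < ((Vab P b a).card : ℤ) * ∑ v ∈ Vab P a b, dpos (P v) a b :=
        mul_lt_mul_of_pos_left k hcardB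
      have t2 : ((Vab P a b).card : ℤ) * ∑ v ∈ Vab P y x, dpos (P v) y x
          ≤ ((Vab P a b).card : ℤ) * ∑ v ∈ Vab P b a, dpos (P v) b a :=
        mul_le_mul_of_nonneg_left hs2 hcardA.le
      linarith
    · have t1 : ((Vab P b a).card : ℤ) * ∑ v ∈ Vab P x y, dpos (P v) x y
          ≤ ((Vab P b a).card : ℤ) * ∑ v ∈ Vab P a b, dpos (P v) a b :=
        mul_le_mul_of_nonneg_left hs1 hcardB.le
      have t2 : ((Vab P a b).card : ℤ) * ∑ v ∈ Vab P y x, dpos (P v) y x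
          < ((Vab P a b).card : ℤ) * ∑ v ∈ Vab P b a, dpos (P v) b a :=
        mul_lt_mul_of_pos_left k hcardA
      linarith
  refine ⟨hmain, fun hsel => ?_⟩
  exact absurd (hsel.2 a b hab) (not_le.2 hmain)
end

section
/- The MaxNash rule satisfies matching domination: for every profile P, if a conflicting pair {a,b} matching-dominates a conflicting pair {x,y}, then the MaxNash score of {a,b} is strictly greater than that of {x,y}; in particular {x,y} ∉ MaxNash(P). -/
open Finset

/-- maxNash satisfies matching domination: if the conflicting pair
`{a,b}` matching-dominates the conflicting pair `{x,y}`, then the maxNash score of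
`{a,b}` is strictly greater than that of `{x,y}`; in particular `{x,y}` is not
selected by maxNash. -/
theorem maxNash_matchingDomination {V C : Type*} [Fintype V] {m : ℕ}
    (P : Profile V C m) (a b x y : C)
    (h : MatchingDominates P a b x y) :
    nashScore P x y < nashScore P a b ∧ ¬ maxNashSel P x y := by
  obtain ⟨⟨hab1, hab2⟩, ⟨hxy1, hxy2⟩, f, hf1, hf2, hle, v₀, hv₀⟩ := h
  have hane : a ≠ b := by
    rintro rfl
    obtain ⟨v, hv⟩ := hab1
    simp [Vab] at hv
  have hxne : x ≠ y := by
    rintro rfl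
    obtain ⟨v, hv⟩ := hxy1
    simp [Vab] at hv
  have pos : ∀ (c d : C) (v : V), v ∈ Vab P c d → 0 < dpos (P v) c d := by
    intro c d v hv
    simp only [Vab, mem_filter, mem_univ, true_and, Fin.lt_def] at hv
    simp only [dpos]
    omega
  have part : ∀ (c d : C), c ≠ d → ∀ v : V, v ∈ Vab P d c ↔ v ∉ Vab P c d := by
    intro c d hcd v
    simp only [Vab, mem_filter, mem_univ, true_and, not_lt]
    constructor
    · exact le_of_lt
    · intro h
      exact lt_of_le_of_ne h (fun heq => hcd ((P v).injective heq.symm))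
  have key : ∀ v : V, v ∈ Vab P a b ↔ f v ∈ Vab P x y := by
    intro v
    constructor
    · exact hf1 v
    · intro hfv
      by_contra hv
      have hv' : v ∈ Vab P b a := (part a b hane v).mpr hv
      have h2 := hf2 v hv'
      have h3 := (part x y hxne (f v)).mp h2
      exact h3 hfv
  have key2 : ∀ v : V, v ∈ Vab P b a ↔ f v ∈ Vab P y x := by
    intro v
    rw [part a b hane v, part x y hxne (f v)]
    exact not_congr (key v)
  have hX : ∑ v ∈ Vab P a b, dpos (P (f v)) x y = ∑ v ∈ Vab P x y, dpos (P v) x y :=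
    Finset.sum_equiv f key (fun _ _ => rfl)
  have hY : ∑ v ∈ Vab P b a, dpos (P (f v)) y x = ∑ v ∈ Vab P y x, dpos (P v) y x :=
    Finset.sum_equiv f key2 (fun _ _ => rfl)
  have hterm1 : ∀ v ∈ Vab P a b, dpos (P (f v)) x y ≤ dpos (P v) a b := by
    intro v hv
    have h1 := pos a b v hv
    have h2 := pos x y (f v) ((key v).mp hv)
    have := hle v
    rwa [abs_of_pos h1, abs_of_pos h2] at this
  have hterm2 : ∀ v ∈ Vab P b a, dpos (P (f v)) y x ≤ dpos (P v) b a := by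
    intro v hv
    have h1 := pos b a v hv
    have h2 := pos y x (f v) ((key2 v).mp hv)
    have := hle v
    have hswap1 : dpos (P (f v)) x y = -dpos (P (f v)) y x := by simp [dpos]
    have hswap2 : dpos (P v) a b = -dpos (P v) b a := by simp [dpos]
    rw [hswap1, hswap2, abs_neg, abs_neg, abs_of_pos h1, abs_of_pos h2] at this
    exact this
  set A := ∑ v ∈ Vab P a b, dpos (P v) a b with hA
  set B := ∑ v ∈ Vab P b a, dpos (P v) b a with hB
  set X := ∑ v ∈ Vab P x y, dpos (P v) x y with hXd
  set Y := ∑ v ∈ Vab P y x, dpos (P v) y x with hYd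
  have hXpos : 0 < X := Finset.sum_pos (fun v hv => pos x y v hv) hxy1
  have hYpos : 0 < Y := Finset.sum_pos (fun v hv => pos y x v hv) hxy2
  have hXA : X ≤ A := by rw [← hX]; exact Finset.sum_le_sum hterm1
  have hYB : Y ≤ B := by rw [← hY]; exact Finset.sum_le_sum hterm2
  have main : X * Y < A * B := by
    by_cases hc : v₀ ∈ Vab P a b
    · have hXA' : X < A := by
        rw [← hX]
        apply Finset.sum_lt_sum hterm1
        refine ⟨v₀, hc, ?_⟩
        have h1 := pos a b v₀ hc
        have h2 := pos x y (f v₀) ((key v₀).mp hc)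
        rwa [abs_of_pos h1, abs_of_pos h2] at hv₀
      calc X * Y < A * Y := mul_lt_mul_of_pos_right hXA' hYpos
        _ ≤ A * B := mul_le_mul_of_nonneg_left hYB (le_of_lt (lt_of_lt_of_le hXpos hXA))
    · have hc' : v₀ ∈ Vab P b a := (part a b hane v₀).mpr hc
      have hYB' : Y < B := by
        rw [← hY]
        apply Finset.sum_lt_sum hterm2
        refine ⟨v₀, hc', ?_⟩
        have h1 := pos b a v₀ hc'
        have h2 := pos y x (f v₀) ((key2 v₀).mp hc')
        have hswap1 : dpos (P (f v₀)) x y = -dpos (P (f v₀)) y x := by simp [dpos]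
        have hswap2 : dpos (P v₀) a b = -dpos (P v₀) b a := by simp [dpos]
        rw [hswap1, hswap2, abs_neg, abs_neg, abs_of_pos h1, abs_of_pos h2] at hv₀
        exact hv₀
      calc X * Y < X * B := mul_lt_mul_of_pos_left hYB' hXpos
        _ ≤ A * B := mul_le_mul_of_nonneg_right hXA (le_of_lt (lt_of_lt_of_le hYpos hYB))
  have main' : nashScore P x y < nashScore P a b := main
  exact ⟨main', fun ⟨_, hmax⟩ => absurd (hmax a b hane) (not_le.mpr main')⟩
end

section
/- The MaxNash rule satisfies balance preference: for every profile P and pairs {a,b}, {x,y} of distinct candidates, if there is a bijection f : V → V with |v(ab)| = |f(v)(xy)| for every voter v and |Σ_{v∈V} v(ab)| < |Σ_{v∈V} v(xy)|, then the MaxNash score of {a,b} is strictly greater than that of {x,y}; in particular {x,y} ∉ MaxNash(P). -/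
open Finset

open Finset

lemma sumAB {V C : Type*} [Fintype V] {m : ℕ} (P : Profile V C m) (a b : C) :
    (∑ v ∈ Vab P a b, dpos (P v) a b) + (∑ v ∈ Vab P b a, dpos (P v) b a)
      = ∑ v : V, |dpos (P v) a b| ∧
    (∑ v ∈ Vab P a b, dpos (P v) a b) - (∑ v ∈ Vab P b a, dpos (P v) b a)
      = ∑ v : V, dpos (P v) a b := by
  simp only [Vab, Finset.sum_filter]
  constructor
  · rw [← Finset.sum_add_distrib]
    refine Finset.sum_congr rfl fun v _ => ?_
    rcases lt_trichotomy (P v a) (P v b) with h1 | h1 | h1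
    · rw [if_pos h1, if_neg (asymm h1), abs_of_pos]
      · simp [dpos]
      · have : ((P v a : ℕ) : ℤ) < ((P v b : ℕ) : ℤ) := by exact_mod_cast h1
        simp [dpos]; omega
    · rw [if_neg (by simp [h1]), if_neg (by simp [h1])]
      simp [dpos, h1]
    · rw [if_neg (asymm h1), if_pos h1, abs_of_neg]
      · simp [dpos]
      · have : ((P v b : ℕ) : ℤ) < ((P v a : ℕ) : ℤ) := by exact_mod_cast h1
        simp [dpos]; omega
  · rw [← Finset.sum_sub_distrib]
    refine Finset.sum_congr rfl fun v _ => ?_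
    rcases lt_trichotomy (P v a) (P v b) with h1 | h1 | h1
    · rw [if_pos h1, if_neg (asymm h1)]; ring
    · rw [if_neg (by simp [h1]), if_neg (by simp [h1])]
      simp [dpos, h1]
    · rw [if_neg (asymm h1), if_pos h1]
      simp [dpos]
lemma fourScore {V C : Type*} [Fintype V] {m : ℕ} (P : Profile V C m) (a b : C) :
    4 * nashScore P a b
      = (∑ v : V, |dpos (P v) a b|) ^ 2 - (∑ v : V, dpos (P v) a b) ^ 2 := by
  obtain ⟨h1, h2⟩ := sumAB P a b
  rw [nashScore, ← h1, ← h2]; ring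

/-- maxNash satisfies balance preference: if there is a bijection
`f : V → V` with `|v(ab)| = |f(v)(xy)|` for every voter `v` (the two pairs have the
same multiset of absolute rank differences) and `|Σ_v v(ab)| < |Σ_v v(xy)|` (the
discrepancy between supporters of `a` and of `b` is more balanced), then the maxNash
score of `{a,b}` is strictly greater than that of `{x,y}`; in particular `{x,y}` is
not selected by maxNash. -/
theorem maxNash_balancePreference {V C : Type*} [Fintype V] {m : ℕ}
    (P : Profile V C m) (a b x y : C) (hab : a ≠ b) (hxy : x ≠ y)
    (f : V ≃ V) (hf : ∀ v : V, |dpos (P v) a b| = |dpos (P (f v)) x y|)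
    (hbal : |∑ v : V, dpos (P v) a b| < |∑ v : V, dpos (P v) x y|) :
    nashScore P x y < nashScore P a b ∧ ¬ maxNashSel P x y := by
  have hT : (∑ v : V, |dpos (P v) a b|) = ∑ v : V, |dpos (P v) x y| := by
    rw [Finset.sum_congr rfl fun v _ => hf v]
    exact Equiv.sum_comp f (fun v => |dpos (P v) x y|)
  have hD : (∑ v : V, dpos (P v) a b) ^ 2 < (∑ v : V, dpos (P v) x y) ^ 2 := by
    rw [← sq_abs, ← sq_abs (∑ v : V, dpos (P v) x y)]
    exact pow_lt_pow_left₀ hbal (abs_nonneg _) (by norm_num)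
  have h1 := fourScore P a b
  have h2 := fourScore P x y
  have hlt : nashScore P x y < nashScore P a b := by
    rw [hT] at h1; linarith
  exact ⟨hlt, fun ⟨_, h⟩ => absurd (h a b hab) (not_le.mpr hlt)⟩
end

section
/- The MaxSwap rule satisfies balance preference: for every profile P and pairs {a,b}, {x,y} of distinct candidates, if there is a bijection f : V → V with |v(ab)| = |f(v)(xy)| for every voter v and |Σ_{v∈V} v(ab)| < |Σ_{v∈V} v(xy)|, then the MaxSwap score of {a,b} is strictly greater than that of {x,y}; in particular {x,y} ∉ MaxSwap(P). -/
open Finset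

lemma two_mul_swapScore {V C : Type*} [Fintype V] {m : ℕ} (P : Profile V C m)
    (a b : C) (hab : a ≠ b) :
    2 * swapScore P a b = (∑ v : V, |dpos (P v) a b|) - |∑ v : V, dpos (P v) a b| := by
  classical
  have hunion : (Vab P a b) ∪ (Vab P b a) = Finset.univ := by
    ext v
    simp only [Vab, Finset.mem_union, Finset.mem_filter, Finset.mem_univ, true_and, iff_true]
    rcases lt_trichotomy (P v a) (P v b) with h | h | h
    · exact Or.inl h
    · exact absurd ((P v).injective h) hab
    · exact Or.inr h
  have hdisj : Disjoint (Vab P a b) (Vab P b a) := by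
    simp only [Finset.disjoint_left, Vab, Finset.mem_filter, Finset.mem_univ, true_and]
    intro v h1 h2; exact absurd (h1.trans h2) (lt_irrefl _)
  have hsplit : ∀ g : V → ℤ, ∑ v : V, g v = ∑ v ∈ Vab P a b, g v + ∑ v ∈ Vab P b a, g v := by
    intro g
    rw [← Finset.sum_union hdisj, hunion]
  have hpos : ∀ v ∈ Vab P a b, |dpos (P v) a b| = dpos (P v) a b := by
    intro v hv
    simp only [Vab, Finset.mem_filter] at hv
    have h : ((P v a : ℕ) : ℤ) < ((P v b : ℕ) : ℤ) := by exact_mod_cast hv.2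
    unfold dpos; rw [abs_of_pos]; omega
  have hneg : ∀ v ∈ Vab P b a, |dpos (P v) a b| = dpos (P v) b a := by
    intro v hv
    simp only [Vab, Finset.mem_filter] at hv
    have h : ((P v b : ℕ) : ℤ) < ((P v a : ℕ) : ℤ) := by exact_mod_cast hv.2
    unfold dpos; rw [abs_of_neg (by omega)]; ring
  have habs : ∑ v : V, |dpos (P v) a b| =
      (∑ v ∈ Vab P a b, dpos (P v) a b) + ∑ v ∈ Vab P b a, dpos (P v) b a := by
    rw [hsplit (fun v => |dpos (P v) a b|), Finset.sum_congr rfl hpos, Finset.sum_congr rfl hneg]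
  have hsum : ∑ v : V, dpos (P v) a b =
      (∑ v ∈ Vab P a b, dpos (P v) a b) - ∑ v ∈ Vab P b a, dpos (P v) b a := by
    rw [hsplit (fun v => dpos (P v) a b)]
    have : ∑ v ∈ Vab P b a, dpos (P v) a b = -∑ v ∈ Vab P b a, dpos (P v) b a := by
      rw [← Finset.sum_neg_distrib]
      refine Finset.sum_congr rfl fun v _ => ?_
      unfold dpos; ring
    rw [this]; ring
  set p := ∑ v ∈ Vab P a b, dpos (P v) a b
  set q := ∑ v ∈ Vab P b a, dpos (P v) b a
  rw [habs, hsum, swapScore]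
  rcases le_total p q with h | h
  · rw [min_eq_left h, abs_of_nonpos (by omega)]; ring
  · rw [min_eq_right h, abs_of_nonneg (by omega)]; ring

/-- maxSwap satisfies balance preference: if there is a bijection
`f : V → V` with `|v(ab)| = |f(v)(xy)|` for every voter `v` (the two pairs have the
same multiset of absolute rank differences) and `|Σ_v v(ab)| < |Σ_v v(xy)|` (the
discrepancy between supporters of `a` and of `b` is more balanced), then the maxSwap
score of `{a,b}` is strictly greater than that of `{x,y}`; in particular `{x,y}` is
not selected by maxSwap. -/
theorem maxSwap_balancePreference {V C : Type*} [Fintype V] {m : ℕ}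
    (P : Profile V C m) (a b x y : C) (hab : a ≠ b) (hxy : x ≠ y)
    (f : V ≃ V) (hf : ∀ v : V, |dpos (P v) a b| = |dpos (P (f v)) x y|)
    (hbal : |∑ v : V, dpos (P v) a b| < |∑ v : V, dpos (P v) x y|) :
    swapScore P x y < swapScore P a b ∧ ¬ maxSwapSel P x y := by
  have hM : ∑ v : V, |dpos (P v) a b| = ∑ v : V, |dpos (P v) x y| := by
    rw [Finset.sum_congr rfl fun v _ => hf v]
    exact Fintype.sum_equiv f _ _ fun v => rfl
  have h1 := two_mul_swapScore P a b hab
  have h2 := two_mul_swapScore P x y hxy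
  have hlt : swapScore P x y < swapScore P a b := by omega
  exact ⟨hlt, fun ⟨_, h⟩ => absurd (h a b hab) (not_le.mpr hlt)⟩
end

section
/- For every profile P and every pair {a,b} of distinct candidates, the sum of the pairwise sum-conflicts conf^+_{v,v'}(a,b) over all unordered pairs {v,v'} of distinct voters equals |V^{b≻a}| · Σ_{v∈V^{a≻b}} v(ab) + |V^{a≻b}| · Σ_{v∈V^{b≻a}} v(ba). -/
open Finset

/-- The pairwise sum-conflict `conf⁺_{v,v'}(a,b)` induced by the pair `{a,b}` between two
rankings: `0` if the two rankings order `a` and `b` the same way, and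
`|v(ab)| + |v'(ba)|` otherwise. -/
def confSum {C : Type*} {m : ℕ} (r r' : C ≃ Fin m) (a b : C) : ℤ :=
  if 0 < dpos r a b * dpos r' a b then 0 else |dpos r a b| + |dpos r' b a|

/-- For every profile and pair `{a,b}` of distinct candidates, the sum
of the pairwise sum-conflicts over all unordered pairs of distinct voters equals the
MaxSum score `|V^{b≻a}| · Σ_{v∈V^{a≻b}} v(ab) + |V^{a≻b}| · Σ_{v∈V^{b≻a}} v(ba)`. -/
theorem sum_confSum_eq_sumScore {V C : Type*} [Fintype V] [LinearOrder V] {m : ℕ}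
    (P : Profile V C m) (a b : C) (hab : a ≠ b) :
    ∑ p ∈ Finset.univ.filter (fun p : V × V => p.1 < p.2), confSum (P p.1) (P p.2) a b
      = sumScore P a b := by
  classical
  set A := Vab P a b with hA
  set B := Vab P b a with hB
  have hne : ∀ v : V, P v a ≠ P v b := fun v h => hab ((P v).injective h)
  have hd0 : ∀ v : V, dpos (P v) a b ≠ 0 := by
    intro v h
    apply hne v
    have h2 : (P v a : ℕ) = (P v b : ℕ) := by
      have h3 := sub_eq_zero.mp h
      exact_mod_cast h3.symm
    exact Fin.ext h2
  have hdneg : ∀ (r : C ≃ Fin m), dpos r b a = - dpos r a b := by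
    intro r; unfold dpos; ring
  have hdA : ∀ v ∈ A, 0 < dpos (P v) a b := by
    intro v hv
    rw [hA, Vab, mem_filter] at hv
    have : (P v a : ℕ) < (P v b : ℕ) := hv.2
    simp only [dpos, sub_pos]
    exact_mod_cast this
  have hdB : ∀ v ∈ B, dpos (P v) a b < 0 := by
    intro v hv
    rw [hB, Vab, mem_filter] at hv
    have : (P v b : ℕ) < (P v a : ℕ) := hv.2
    simp only [dpos, sub_neg]
    exact_mod_cast this
  have hsymm : ∀ v w : V, confSum (P v) (P w) a b = confSum (P w) (P v) a b := by
    intro v w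
    unfold confSum
    rw [mul_comm]
    congr 1
    rw [hdneg, hdneg, abs_neg, abs_neg, add_comm]
  have hdiag : ∀ v : V, confSum (P v) (P v) a b = 0 := by
    intro v
    rw [confSum, if_pos (mul_self_pos.mpr (hd0 v))]
  -- doubling
  have hswap : ∑ p ∈ Finset.univ.filter (fun p : V × V => p.2 < p.1),
        confSum (P p.1) (P p.2) a b
      = ∑ p ∈ Finset.univ.filter (fun p : V × V => p.1 < p.2),
        confSum (P p.1) (P p.2) a b := by
    apply Finset.sum_equiv (Equiv.prodComm V V)
    · intro p; simp
    · intro p _; exact hsymm p.1 p.2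
  have htot : ∑ v : V, ∑ w : V, confSum (P v) (P w) a b
      = 2 * ∑ p ∈ Finset.univ.filter (fun p : V × V => p.1 < p.2),
          confSum (P p.1) (P p.2) a b := by
    have hpt : ∑ p : V × V, confSum (P p.1) (P p.2) a b
        = ∑ v : V, ∑ w : V, confSum (P v) (P w) a b :=
      Fintype.sum_prod_type _
    rw [← hpt]
    rw [← Finset.sum_filter_add_sum_filter_not Finset.univ
        (fun p : V × V => p.1 < p.2) (fun p => confSum (P p.1) (P p.2) a b)]
    have hrest : ∑ p ∈ Finset.univ.filter (fun p : V × V => ¬ p.1 < p.2),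
        confSum (P p.1) (P p.2) a b
        = ∑ p ∈ Finset.univ.filter (fun p : V × V => p.2 < p.1),
            confSum (P p.1) (P p.2) a b := by
      rw [← Finset.sum_filter_add_sum_filter_not
          (Finset.univ.filter (fun p : V × V => ¬ p.1 < p.2))
          (fun p : V × V => p.2 < p.1) (fun p => confSum (P p.1) (P p.2) a b)]
      have h1 : (Finset.univ.filter (fun p : V × V => ¬ p.1 < p.2)).filter
          (fun p : V × V => p.2 < p.1)
          = Finset.univ.filter (fun p : V × V => p.2 < p.1) := by
        ext p; simp only [mem_filter, mem_univ, true_and]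
        exact ⟨fun h => h.2, fun h => ⟨not_lt.mpr h.le, h⟩⟩
      have h2 : ∑ p ∈ (Finset.univ.filter (fun p : V × V => ¬ p.1 < p.2)).filter
          (fun p : V × V => ¬ p.2 < p.1), confSum (P p.1) (P p.2) a b = 0 := by
        apply Finset.sum_eq_zero
        intro p hp
        simp only [mem_filter, mem_univ, true_and, not_lt] at hp
        have : p.1 = p.2 := le_antisymm hp.2 hp.1
        rw [this]; exact hdiag p.2
      rw [h1, h2, add_zero]
    rw [hrest, hswap]; ring
  -- splitting over A and B
  have hcompl : Finset.univ.filter (fun v : V => ¬ P v a < P v b) = B := by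
    ext v
    simp only [hB, Vab, mem_filter, mem_univ, true_and]
    constructor
    · intro h; exact lt_of_le_of_ne (not_lt.mp h) (fun e => hne v e.symm)
    · intro h; exact not_lt.mpr h.le
  have hsplit : ∀ g : V → ℤ, ∑ v : V, g v = ∑ v ∈ A, g v + ∑ v ∈ B, g v := by
    intro g
    rw [← Finset.sum_filter_add_sum_filter_not Finset.univ
        (fun v : V => P v a < P v b) g, hcompl]
    rfl
  have hAA : ∀ v ∈ A, ∀ w ∈ A, confSum (P v) (P w) a b = 0 := by
    intro v hv w hw
    rw [confSum, if_pos (mul_pos (hdA v hv) (hdA w hw))]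
  have hBB : ∀ v ∈ B, ∀ w ∈ B, confSum (P v) (P w) a b = 0 := by
    intro v hv w hw
    rw [confSum, if_pos (mul_pos_of_neg_of_neg (hdB v hv) (hdB w hw))]
  have hABval : ∀ v ∈ A, ∀ w ∈ B,
      confSum (P v) (P w) a b = dpos (P v) a b + dpos (P w) b a := by
    intro v hv w hw
    rw [confSum, if_neg (by
      intro h
      exact absurd h (not_lt.mpr (mul_nonpos_of_nonneg_of_nonpos
        (hdA v hv).le (hdB w hw).le)))]
    rw [abs_of_pos (hdA v hv), abs_of_pos (by rw [hdneg]; linarith [hdB w hw])]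
  have hBAval : ∀ v ∈ B, ∀ w ∈ A,
      confSum (P v) (P w) a b = dpos (P v) b a + dpos (P w) a b := by
    intro v hv w hw
    rw [hsymm, hABval w hw v hv]; ring
  have htot2 : ∑ v : V, ∑ w : V, confSum (P v) (P w) a b = 2 * sumScore P a b := by
    rw [hsplit]
    have e1 : ∑ v ∈ A, ∑ w : V, confSum (P v) (P w) a b
        = ∑ v ∈ A, (∑ w ∈ B, (dpos (P v) a b + dpos (P w) b a)) := by
      apply Finset.sum_congr rfl
      intro v hv
      rw [hsplit]
      rw [Finset.sum_eq_zero (fun w hw => hAA v hv w hw), zero_add]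
      exact Finset.sum_congr rfl (fun w hw => hABval v hv w hw)
    have e2 : ∑ v ∈ B, ∑ w : V, confSum (P v) (P w) a b
        = ∑ v ∈ B, (∑ w ∈ A, (dpos (P v) b a + dpos (P w) a b)) := by
      apply Finset.sum_congr rfl
      intro v hv
      rw [hsplit]
      rw [Finset.sum_eq_zero (fun w hw => hBB v hv w hw), add_zero]
      exact Finset.sum_congr rfl (fun w hw => hBAval v hv w hw)
    rw [e1, e2]
    simp only [Finset.sum_add_distrib, Finset.sum_const, nsmul_eq_mul]
    rw [sumScore]
    rw [← hA, ← hB]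
    rw [Finset.mul_sum, Finset.mul_sum]
    ring
  have := htot.symm.trans htot2
  linarith
end
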